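/- arXiv:2011.01053 — 8 statements merged into one kernel-verified Lean document; each statement's English description precedes it below -/
import Mathlib

section
/- Let d ≥ 1 and let H be an (a_1,…,a_d)-fractionally balanced d-partite hypergraph. Then the fractional matching number of H equals the minimum of the side sizes: ν*(H) = min_{1 ≤ t ≤ d} a_t. -/
/-- The degree of vertex `v` (on side `t`) with respect to a weight function `f`
on a `d`-partite hypergraph with sides `Fin (a t)`. -/
def degree {d : ℕ} {a : Fin d → ℕ} (f : (∀ t, Fin (a t)) → ℝ)
    (t : Fin d) (v : Fin (a t)) : ℝ :=
  ∑ e : ∀ t, Fin (a t), if e t = v then f e else 0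

/-- `f` is a balanced weight function on the hypergraph `H`:
it is nonnegative, vanishes outside `H`, and has constant degrees on every side. -/
def IsBalanced {d : ℕ} {a : Fin d → ℕ} (H : Finset (∀ t, Fin (a t)))
    (f : (∀ t, Fin (a t)) → ℝ) : Prop :=
  (∀ e, 0 ≤ f e) ∧ (∀ e, e ∉ H → f e = 0) ∧
    ∀ t : Fin d, ∀ v w : Fin (a t), degree f t v = degree f t w

/-- `H` is `(a 0, …, a (d-1))`-fractionally balanced. -/
def FracBalanced {d : ℕ} {a : Fin d → ℕ} (H : Finset (∀ t, Fin (a t))) : Prop :=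
  ∃ f, IsBalanced H f ∧ f ≠ 0

/-- `f` is a fractional matching of `H`: nonnegative, supported on `H`,
and every vertex has degree at most 1. -/
def IsFracMatching {d : ℕ} {a : Fin d → ℕ} (H : Finset (∀ t, Fin (a t)))
    (f : (∀ t, Fin (a t)) → ℝ) : Prop :=
  (∀ e, 0 ≤ f e) ∧ (∀ e, e ∉ H → f e = 0) ∧
    ∀ t : Fin d, ∀ v : Fin (a t), degree f t v ≤ 1

/-- If `H` is an `(a 1, …, a d)`-fractionally balanced `d`-partite hypergraph
(`d ≥ 1`), then its fractional matching number equals `min_t a t`. -/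
theorem frac_matching_number_of_fracBalanced
    (d : ℕ) (hd : 1 ≤ d) (a : Fin d → ℕ) (H : Finset (∀ t, Fin (a t)))
    (hH : FracBalanced H) :
    IsGreatest {x : ℝ | ∃ f, IsFracMatching H f ∧ ∑ e, f e = x}
      ((⨅ t, a t : ℕ) : ℝ) := by
  obtain ⟨f, ⟨hf0, hfH, hfbal⟩, hfne⟩ := hH
  have : Nonempty (Fin d) := ⟨⟨0, hd⟩⟩
  -- all sides are nonempty
  have ha : ∀ t, 0 < a t := by
    intro t
    rcases Nat.eq_zero_or_pos (a t) with h | h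
    · exfalso
      apply hfne
      funext e
      exact ((h ▸ e t : Fin 0)).elim0
    · exact h
  -- sum of degrees on a side equals total weight
  have key : ∀ (g : (∀ t, Fin (a t)) → ℝ) (t : Fin d),
      ∑ v, degree g t v = ∑ e, g e := by
    intro g t
    unfold degree
    rw [Finset.sum_comm]
    simp
  set S : ℝ := ∑ e, f e with hSdef
  have hS : 0 < S := by
    obtain ⟨e0, he0⟩ := Function.ne_iff.mp hfne
    exact Finset.sum_pos' (fun e _ => hf0 e)
      ⟨e0, Finset.mem_univ _, lt_of_le_of_ne (hf0 e0) (Ne.symm he0)⟩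
  have hdeg : ∀ t (v : Fin (a t)), (a t : ℝ) * degree f t v = S := by
    intro t v
    calc (a t : ℝ) * degree f t v = ∑ _w : Fin (a t), degree f t v := by
          rw [Finset.sum_const, Finset.card_univ, Fintype.card_fin, nsmul_eq_mul]
      _ = ∑ w, degree f t w := Finset.sum_congr rfl fun w _ => hfbal t v w
      _ = S := key f t
  set m : ℝ := ((⨅ t, a t : ℕ) : ℝ) with hmdef
  have hm_le : ∀ t, m ≤ (a t : ℝ) := by
    intro t
    exact_mod_cast Nat.cast_le.mpr (ciInf_le (OrderBot.bddBelow _) t)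
  have hm_nonneg : 0 ≤ m := by positivity
  obtain ⟨t0, ht0⟩ : ∃ t, a t = ⨅ t, a t := Nat.sInf_mem (Set.range_nonempty a)
  set g : (∀ t, Fin (a t)) → ℝ := fun e => (m / S) * f e with hgdef
  have hdegg : ∀ t (v : Fin (a t)), degree g t v = (m / S) * degree f t v := by
    intro t v
    simp only [degree, hgdef, mul_ite, mul_zero, Finset.mul_sum]
  constructor
  · refine ⟨g, ⟨?_, ?_, ?_⟩, ?_⟩
    · intro e
      exact mul_nonneg (div_nonneg hm_nonneg hS.le) (hf0 e)
    · intro e he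
      simp [hgdef, hfH e he]
    · intro t v
      have hat : (0:ℝ) < (a t : ℝ) := by exact_mod_cast ha t
      have hdf : degree f t v = S / (a t : ℝ) := by
        field_simp
        linarith [hdeg t v]
      rw [hdegg, hdf]
      rw [div_mul_div_comm, mul_comm m S, ← div_mul_div_comm,
        div_self hS.ne']
      rw [one_mul, div_le_one hat]
      exact hm_le t
    · show ∑ e, (m / S) * f e = m
      rw [← Finset.mul_sum, ← hSdef, div_mul_cancel₀ m hS.ne']
  · rintro x ⟨f', ⟨h0, hH', hdeg'⟩, rfl⟩
    calc ∑ e, f' e = ∑ v, degree f' t0 v := (key f' t0).symm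
      _ ≤ ∑ _v : Fin (a t0), (1:ℝ) := Finset.sum_le_sum fun v _ => hdeg' t0 v
      _ = (a t0 : ℝ) := by simp
      _ = m := by rw [hmdef, ht0]
end

section
/- Let d ≥ 2 and let a_1,…,a_d be positive integers. Then every (a_1,…,a_d)-fractionally balanced d-partite hypergraph contains a matching of size ⌈(min_{1 ≤ t ≤ d} a_t)/(d−1)⌉. -/
/-- `M` is a matching in `H`: a set of edges of `H` any two distinct members
of which differ in every coordinate. -/
def IsMatching {d : ℕ} {a : Fin d → ℕ} (H M : Finset (∀ t, Fin (a t))) : Prop :=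
  M ⊆ H ∧ ∀ e ∈ M, ∀ f ∈ M, e ≠ f → ∀ t, e t ≠ f t

/-!
Rescaling a balanced weight gives a fractional matching of total weight `n = min_t a_t`, so it
suffices to turn a fractional matching of weight greater than `(k - 1)(d - 1)` into a matching
of size `k`. Greedily: pass to a fractional matching of no smaller weight having an edge `e₀` of
weight at least `1/(d-1)`, put `e₀` into the matching and delete every edge meeting `e₀`. The
`d` vertices of `e₀` have total degree at most `d` and count `e₀` itself `d` times, so at most
`d - 1` of the weight is lost.

A heavy edge exists by an extreme-point argument, run as an induction on the number of support
edges plus the number of non-tight vertices. If all weights are below `1/(d-1)`, every tight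
vertex lies in at least `d` support edges, so double counting gives no more tight vertices than
support edges, with equality only if all vertices of all support edges are tight; in that case
the degree equations on two different sides have the same sum, so one of them is redundant.
Either way some nonzero perturbation of the support keeps every tight degree fixed, and moving
along it, in the direction that does not decrease the weight, until an edge weight vanishes or a
new vertex becomes tight decreases that count.
-/

open Finset

variable {d : ℕ} {a : Fin d → ℕ}

section Degree

variable (f g : (∀ t, Fin (a t)) → ℝ) (t : Fin d) (v : Fin (a t))

theorem degree_add : degree (f + g) t v = degree f t v + degree g t v := by
  simp only [degree, Pi.add_apply, ← sum_add_distrib, ite_add_ite, add_zero]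

theorem degree_smul (c : ℝ) : degree (c • f) t v = c * degree f t v := by
  simp only [degree, Pi.smul_apply, smul_eq_mul, mul_sum, mul_ite, mul_zero]

theorem degree_neg : degree (-f) t v = -degree f t v := by
  simpa using degree_smul f t v (-1)

theorem sum_degree : ∑ v, degree f t v = ∑ e, f e := by
  simp only [degree]
  rw [sum_comm]
  simp

variable {f g t v}

theorem degree_mono (h : ∀ e, f e ≤ g e) : degree f t v ≤ degree g t v :=
  sum_le_sum fun e _ => by split_ifs <;> simp [h e]

theorem le_degree (hf : ∀ e, 0 ≤ f e) (e : ∀ t, Fin (a t)) : f e ≤ degree f t (e t) :=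
  single_le_sum (f := fun e' => if e' t = e t then f e' else 0)
    (fun e' _ => by split_ifs <;> simp [hf e']) (mem_univ e) |>.trans_eq' (by simp)

theorem degree_eq_zero_of_forall (h : ∀ e, e t = v → f e = 0) : degree f t v = 0 :=
  sum_eq_zero fun e _ => by split_ifs with he <;> simp [h e, he]

theorem degree_eq_sum_of_forall_ne (h : ∀ v' ≠ v, degree f t v' = 0) :
    degree f t v = ∑ e, f e := by
  rw [← sum_degree f t, sum_eq_single v (fun v' _ hv' => h v' hv') (by simp)]

end Degree

theorem exists_ratio_test {ι : Type*} [Fintype ι] (p q : ι → ℝ) (hp : ∀ i, 0 ≤ p i)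
    (hq : ∃ i, q i < 0) :
    ∃ ε, 0 ≤ ε ∧ (∀ i, 0 ≤ p i + ε * q i) ∧ ∃ i, q i < 0 ∧ p i + ε * q i = 0 := by
  obtain ⟨i, hi, hmin⟩ := exists_min_image {i | q i < 0} (fun i => p i / -q i)
    (by obtain ⟨i, hi⟩ := hq; exact ⟨i, (mem_filter_univ _).2 hi⟩)
  rw [mem_filter_univ] at hi
  refine ⟨p i / -q i, div_nonneg (hp i) (by linarith), fun j => ?_, i, hi, ?_⟩
  · rcases lt_or_ge (q j) 0 with hj | hj
    · have := hmin j ((mem_filter_univ _).2 hj)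
      rw [le_div_iff₀ (by linarith)] at this
      linarith
    · exact add_nonneg (hp j) (mul_nonneg (div_nonneg (hp i) (by linarith)) hj)
  · field_simp [hi.ne]
    ring

structure IsFractionalMatching (H : Finset (∀ t, Fin (a t))) (x : (∀ t, Fin (a t)) → ℝ) :
    Prop where
  nonneg : ∀ e, 0 ≤ x e
  eq_zero_of_notMem : ∀ e ∉ H, x e = 0
  degree_le_one : ∀ t v, degree x t v ≤ 1

noncomputable def edgeSupport (x : (∀ t, Fin (a t)) → ℝ) : Finset (∀ t, Fin (a t)) :=
  {e | x e ≠ 0}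

noncomputable def tightVertices (x : (∀ t, Fin (a t)) → ℝ) : Finset (Σ t, Fin (a t)) :=
  {w | degree x w.1 w.2 = 1}

noncomputable def potential (x : (∀ t, Fin (a t)) → ℝ) : ℕ :=
  #(edgeSupport x) + #(tightVertices x)ᶜ

@[simp] theorem mem_edgeSupport {x : (∀ t, Fin (a t)) → ℝ} {e : ∀ t, Fin (a t)} :
    e ∈ edgeSupport x ↔ x e ≠ 0 := by
  simp [edgeSupport]

@[simp] theorem mem_tightVertices {x : (∀ t, Fin (a t)) → ℝ} {w : Σ t, Fin (a t)} :
    w ∈ tightVertices x ↔ degree x w.1 w.2 = 1 := by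
  simp [tightVertices]

theorem potential_lt {x y : (∀ t, Fin (a t)) → ℝ} (hsupp : ∀ e, x e = 0 → y e = 0)
    (htight : ∀ w : Σ t, Fin (a t), degree x w.1 w.2 = 1 → degree y w.1 w.2 = 1)
    (h : (∃ e, x e ≠ 0 ∧ y e = 0) ∨ ∃ w : Σ t, Fin (a t), degree x w.1 w.2 ≠ 1 ∧
      degree y w.1 w.2 = 1) :
    potential y < potential x := by
  have hS : edgeSupport y ⊆ edgeSupport x := fun e => by simpa using mt (hsupp e)
  have hT : (tightVertices y)ᶜ ⊆ (tightVertices x)ᶜ := fun w => by simpa using mt (htight w)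
  rcases h with ⟨e, hxe, hye⟩ | ⟨w, hxw, hyw⟩
  · have : edgeSupport y ⊂ edgeSupport x := ssubset_of_subset_of_ne hS fun h => by
      simpa [hye, hxe] using congrArg (e ∈ ·) h
    exact add_lt_add_of_lt_of_le (card_lt_card this) (card_le_card hT)
  · have : (tightVertices y)ᶜ ⊂ (tightVertices x)ᶜ := ssubset_of_subset_of_ne hT fun h => by
      simpa [hyw, hxw] using congrArg (w ∈ ·) h
    exact add_lt_add_of_le_of_lt (card_le_card hS) (card_lt_card this)

section Perturbation

variable {H : Finset (∀ t, Fin (a t))} {x z : (∀ t, Fin (a t)) → ℝ}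

theorem IsFractionalMatching.exists_potential_lt_of_sum_nonneg (hd : 0 < d)
    (hx : IsFractionalMatching H x) (hz : z ≠ 0) (hzx : ∀ e, x e = 0 → z e = 0)
    (hzT : ∀ w ∈ tightVertices x, degree z w.1 w.2 = 0) (hsum : 0 ≤ ∑ e, z e) :
    ∃ y, IsFractionalMatching H y ∧ ∑ e, x e ≤ ∑ e, y e ∧ potential y < potential x := by
  -- Ratio test over the edge weights (`inl`) and the vertex slacks `1 - degree` (`inr`); some
  -- constraint binds because a nonnegative `z ≠ 0` has positive degree at some vertex.
  have hq : ∃ i, Sum.elim z (fun w : Σ t, Fin (a t) => -degree z w.1 w.2) i < 0 := by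
    by_contra! hq
    obtain ⟨e, he⟩ := Function.ne_iff.1 hz
    have hz0 e : 0 ≤ z e := hq (.inl e)
    have hdeg := hq (.inr ⟨_, e ⟨0, hd⟩⟩)
    simp only [Sum.elim_inr, neg_nonneg] at hdeg
    linarith [le_degree (t := ⟨0, hd⟩) hz0 e, (hz0 e).lt_of_ne' he]
  obtain ⟨ε, hε, hfeas, i, hqi, hpi⟩ := exists_ratio_test
    (Sum.elim x fun w : Σ t, Fin (a t) => 1 - degree x w.1 w.2) _
    (Sum.rec hx.nonneg fun w => sub_nonneg.2 (hx.degree_le_one w.1 w.2)) hq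
  have hdeg t v : degree (x + ε • z) t v = degree x t v + ε * degree z t v := by
    rw [degree_add, degree_smul]
  refine ⟨x + ε • z, ⟨fun e => by simpa using hfeas (.inl e), fun e he => ?_, fun t v => ?_⟩,
    ?_, potential_lt (fun e he => by simp [he, hzx e he]) (fun w hw => ?_) ?_⟩
  · simp [hx.eq_zero_of_notMem e he, hzx e (hx.eq_zero_of_notMem e he)]
  · have := hfeas (.inr ⟨t, v⟩)
    simp only [Sum.elim_inr] at this
    linarith [hdeg t v]
  · simp only [Pi.add_apply, Pi.smul_apply, smul_eq_mul, sum_add_distrib, ← mul_sum]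
    linarith [mul_nonneg hε hsum]
  · rw [hdeg, hw, hzT w (mem_tightVertices.2 hw)]
    ring
  · rcases i with e | w
    · exact .inl ⟨e, fun h => hqi.ne (hzx e h), by simpa using hpi⟩
    · refine .inr ⟨w, fun h => hqi.ne (by simp [hzT w (mem_tightVertices.2 h)]), ?_⟩
      simp only [Sum.elim_inr] at hpi
      linarith [hdeg w.1 w.2]

theorem IsFractionalMatching.exists_potential_lt (hd : 0 < d)
    (hx : IsFractionalMatching H x) (hz : z ≠ 0) (hzx : ∀ e, x e = 0 → z e = 0)
    (hzT : ∀ w ∈ tightVertices x, degree z w.1 w.2 = 0) :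
    ∃ y, IsFractionalMatching H y ∧ ∑ e, x e ≤ ∑ e, y e ∧ potential y < potential x := by
  rcases le_total 0 (∑ e, z e) with hsum | hsum
  · exact hx.exists_potential_lt_of_sum_nonneg hd hz hzx hzT hsum
  · refine hx.exists_potential_lt_of_sum_nonneg hd (neg_ne_zero.2 hz) (fun e he => by
      simp [hzx e he]) (fun w hw => by simp [degree_neg, hzT w hw]) (by simpa using hsum)

end Perturbation

theorem exists_ne_zero_forall_degree_eq_zero (S : Finset (∀ t, Fin (a t)))
    (T : Finset (Σ t, Fin (a t))) (h : #T < #S) :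
    ∃ z : (∀ t, Fin (a t)) → ℝ, z ≠ 0 ∧ (∀ e ∉ S, z e = 0) ∧
      ∀ w ∈ T, degree z w.1 w.2 = 0 := by
  let incidence (e : ∀ t, Fin (a t)) (w : T) : ℝ := if e w.1.1 = w.1.2 then 1 else 0
  have hdep : ¬LinearIndepOn ℝ incidence S := fun hind => by
    have := hind.fintype_card_le_finrank
    simp only [coe_sort_coe, Fintype.card_coe, Module.finrank_fintype_fun_eq_card] at this
    omega
  obtain ⟨f, hf, e₀, he₀S, he₀⟩ : ∃ f : (∀ t, Fin (a t)) → ℝ,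
      ∑ e ∈ S, f e • incidence e = 0 ∧ ∃ e ∈ S, f e ≠ 0 := by
    simpa [linearIndepOn_finset_iff] using hdep
  refine ⟨fun e => if e ∈ S then f e else 0, Function.ne_iff.2 ⟨e₀, by simpa [he₀S]⟩,
    fun e he => if_neg he, fun w hw => ?_⟩
  have := congrFun hf ⟨w, hw⟩
  rw [Finset.sum_apply] at this
  simp only [Pi.smul_apply, smul_eq_mul, incidence, mul_ite, mul_one, mul_zero,
    Pi.zero_apply] at this
  calc degree _ w.1 w.2 = ∑ e ∈ S, if e w.1 = w.2 then f e else 0 := by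
        rw [degree, ← sum_subset (subset_univ S) fun e _ he => by simp [he]]
        exact sum_congr rfl fun e he => by simp [he]
    _ = 0 := this

theorem card_filter_incident (T : Finset (Σ t, Fin (a t))) (e : ∀ t, Fin (a t)) :
    #{w ∈ T | e w.1 = w.2} = #{t | (⟨t, e t⟩ : Σ t, Fin (a t)) ∈ T} := by
  refine card_nbij' (·.1) (fun t => ⟨t, e t⟩) ?_ ?_ ?_ ?_
  · rintro ⟨t, v⟩ hw
    obtain ⟨hw, rfl⟩ := by simpa using hw
    simpa using hw
  · intro t ht
    simpa using ht
  · rintro ⟨t, v⟩ hw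
    obtain ⟨-, rfl⟩ := by simpa using hw
    rfl
  · exact fun t _ => rfl

theorem le_card_filter_edgeSupport {x : (∀ t, Fin (a t)) → ℝ}
    (hsmall : ∀ e, ((d : ℝ) - 1) * x e < 1) {t : Fin d} {v : Fin (a t)}
    (htight : degree x t v = 1) :
    d ≤ #{e ∈ edgeSupport x | e t = v} := by
  set F := {e ∈ edgeSupport x | e t = v}
  have hF : ∑ e ∈ F, x e = 1 := by
    rw [← htight, degree, ← sum_filter]
    exact sum_subset (fun e he => by simp_all [F]) fun e he heF => by simp_all [F]
  have hFne : F.Nonempty := nonempty_of_sum_ne_zero (f := x) (by rw [hF]; exact one_ne_zero)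
  have : (d : ℝ) - 1 < #F := by
    calc (d : ℝ) - 1 = ∑ e ∈ F, ((d : ℝ) - 1) * x e := by rw [← mul_sum, hF, mul_one]
      _ < ∑ e ∈ F, 1 := sum_lt_sum_of_nonempty hFne fun e _ => hsmall e
      _ = #F := by simp
  have : d < #F + 1 := by exact_mod_cast (by linarith : (d : ℝ) < #F + 1)
  omega

theorem mul_card_tightVertices_le {x : (∀ t, Fin (a t)) → ℝ}
    (hsmall : ∀ e, ((d : ℝ) - 1) * x e < 1) :
    d * #(tightVertices x) ≤
      ∑ e ∈ edgeSupport x, #{t | (⟨t, e t⟩ : Σ t, Fin (a t)) ∈ tightVertices x} := by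
  let r (w : Σ t, Fin (a t)) (e : ∀ t, Fin (a t)) : Prop := e w.1 = w.2
  calc d * #(tightVertices x) = ∑ _w ∈ tightVertices x, d := by rw [sum_const, smul_eq_mul,
        mul_comm]
    _ ≤ ∑ w ∈ tightVertices x, #((edgeSupport x).bipartiteAbove r w) :=
        sum_le_sum fun w hw => le_card_filter_edgeSupport hsmall (mem_tightVertices.1 hw)
    _ = ∑ e ∈ edgeSupport x, #((tightVertices x).bipartiteBelow r e) :=
        sum_card_bipartiteAbove_eq_sum_card_bipartiteBelow r
    _ = _ := sum_congr rfl fun e _ => card_filter_incident _ e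

theorem degree_eq_zero_of_forall_ne (hd : 2 ≤ d) {z : (∀ t, Fin (a t)) → ℝ}
    {T : Finset (Σ t, Fin (a t))} {w₀ : Σ t, Fin (a t)}
    (hzT : ∀ e, z e ≠ 0 → ∀ t, (⟨t, e t⟩ : Σ t, Fin (a t)) ∈ T)
    (hz : ∀ w ∈ T, w ≠ w₀ → degree z w.1 w.2 = 0) : degree z w₀.1 w₀.2 = 0 := by
  have hzero : ∀ w ≠ w₀, degree z w.1 w.2 = 0 := by
    intro w hw
    by_cases hwT : w ∈ T
    · exact hz w hwT hw
    · refine degree_eq_zero_of_forall fun e he => ?_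
      by_contra hze
      have := hzT e hze w.1
      rw [he] at this
      exact hwT this
  obtain ⟨t₁, v₁⟩ := w₀
  have : Nontrivial (Fin d) := Fin.nontrivial_iff_two_le.2 hd
  obtain ⟨t₂, ht₂⟩ := exists_ne t₁
  have hsum : ∑ e, z e = 0 := by
    rw [← sum_degree z t₂]
    exact sum_eq_zero fun v _ => hzero ⟨t₂, v⟩ (by simp [ht₂])
  rw [degree_eq_sum_of_forall_ne fun v hv => hzero ⟨t₁, v⟩ (by simpa using hv), hsum]

theorem exists_degree_eq_zero_on_tightVertices (hd : 2 ≤ d) {x : (∀ t, Fin (a t)) → ℝ}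
    (hx : x ≠ 0) (hsmall : ∀ e, ((d : ℝ) - 1) * x e < 1) :
    ∃ z : (∀ t, Fin (a t)) → ℝ, z ≠ 0 ∧ (∀ e, x e = 0 → z e = 0) ∧
      ∀ w ∈ tightVertices x, degree z w.1 w.2 = 0 := by
  set S := edgeSupport x
  set T := tightVertices x
  have hcount := mul_card_tightVertices_le hsmall
  have hmemS {e} : e ∉ S ↔ x e = 0 := by simp [S]
  by_cases hfull : ∀ e ∈ S, ∀ t, (⟨t, e t⟩ : Σ t, Fin (a t)) ∈ T
  · obtain ⟨e₁, he₁⟩ : S.Nonempty := by simpa [S, Function.ne_iff, Finset.Nonempty] using hx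
    have hTS : #T ≤ #S := by
      refine Nat.le_of_mul_le_mul_left (hcount.trans ?_) (by omega : 0 < d)
      calc _ ≤ ∑ _e ∈ S, d := sum_le_sum fun e _ => (card_filter_le _ _).trans_eq (card_fin d)
        _ = d * #S := by rw [sum_const, smul_eq_mul, mul_comm]
    set w₀ : Σ t, Fin (a t) := ⟨⟨0, by omega⟩, e₁ ⟨0, by omega⟩⟩
    obtain ⟨z, hz, hzS, hzT⟩ := exists_ne_zero_forall_degree_eq_zero S (T.erase w₀) (by
      rw [card_erase_of_mem (hfull e₁ he₁ _)]
      have := card_pos.2 ⟨e₁, he₁⟩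
      omega)
    have hzx e (he : x e = 0) : z e = 0 := hzS e (hmemS.2 he)
    refine ⟨z, hz, hzx, fun w hw => ?_⟩
    rcases eq_or_ne w w₀ with rfl | hw₀
    · exact degree_eq_zero_of_forall_ne hd (fun e he => hfull e (not_not.1 (mt hmemS.1
        (mt (hzx e) he)))) fun w hw hne => hzT w (mem_erase.2 ⟨hne, hw⟩)
    · exact hzT w (mem_erase.2 ⟨hw₀, hw⟩)
  · push Not at hfull
    obtain ⟨e₀, he₀, t₀, ht₀⟩ := hfull
    have hlt : ∑ e ∈ S, #{t | (⟨t, e t⟩ : Σ t, Fin (a t)) ∈ T} < d * #S := by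
      calc _ < ∑ _e ∈ S, d := sum_lt_sum
            (fun e _ => (card_filter_le _ _).trans_eq (card_fin d))
            ⟨e₀, he₀, (card_lt_card (filter_ssubset.2 ⟨t₀, mem_univ _, ht₀⟩)).trans_eq
              (card_fin d)⟩
        _ = d * #S := by rw [sum_const, smul_eq_mul, mul_comm]
    obtain ⟨z, hz, hzS, hzT⟩ := exists_ne_zero_forall_degree_eq_zero S T
      (Nat.lt_of_mul_lt_mul_left (hcount.trans_lt hlt))
    exact ⟨z, hz, fun e he => hzS e (hmemS.2 he), hzT⟩

theorem IsFractionalMatching.exists_heavy_edge (hd : 2 ≤ d) {H : Finset (∀ t, Fin (a t))}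
    {x : (∀ t, Fin (a t)) → ℝ} (hx : IsFractionalMatching H x) (hpos : 0 < ∑ e, x e) :
    ∃ y, IsFractionalMatching H y ∧ ∑ e, x e ≤ ∑ e, y e ∧ ∃ e, 1 ≤ ((d : ℝ) - 1) * y e := by
  induction hn : potential x using Nat.strong_induction_on generalizing x with
  | _ n ih =>
  by_cases hheavy : ∃ e, 1 ≤ ((d : ℝ) - 1) * x e
  · exact ⟨x, hx, le_rfl, hheavy⟩
  push Not at hheavy
  have hx0 : x ≠ 0 := by rintro rfl; simp at hpos
  obtain ⟨z, hz, hzx, hzT⟩ := exists_degree_eq_zero_on_tightVertices hd hx0 hheavy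
  obtain ⟨y, hy, hxy, hyx⟩ := hx.exists_potential_lt (by omega) hz hzx hzT
  obtain ⟨y', hy', hyy', he⟩ := ih _ (hn ▸ hyx) hy (hpos.trans_le hxy) rfl
  exact ⟨y', hy', hxy.trans hyy', he⟩

theorem IsMatching.mono {H H' M : Finset (∀ t, Fin (a t))} (hM : IsMatching H' M)
    (h : H' ⊆ H) : IsMatching H M :=
  ⟨hM.1.trans h, hM.2⟩

theorem IsMatching.subset {H M M' : Finset (∀ t, Fin (a t))} (hM : IsMatching H M)
    (h : M' ⊆ M) : IsMatching H M' :=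
  ⟨h.trans hM.1, fun e he f hf => hM.2 e (h he) f (h hf)⟩

theorem IsMatching.insert {H M : Finset (∀ t, Fin (a t))} {e₀ : ∀ t, Fin (a t)}
    (hM : IsMatching H M) (he₀ : e₀ ∈ H) (h : ∀ e ∈ M, ∀ t, e t ≠ e₀ t) :
    IsMatching H (insert e₀ M) := by
  refine ⟨insert_subset he₀ hM.1, ?_⟩
  simp only [mem_insert]
  rintro e (rfl | he) f (rfl | hf) hne t
  · exact absurd rfl hne
  · exact (h f hf t).symm
  · exact h e he t
  · exact hM.2 e he f hf hne t

namespace IsFractionalMatching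

variable {H : Finset (∀ t, Fin (a t))} {x : (∀ t, Fin (a t)) → ℝ}

theorem filter (hx : IsFractionalMatching H x) (P : (∀ t, Fin (a t)) → Prop)
    [DecidablePred P] : IsFractionalMatching {e ∈ H | P e} fun e => if P e then x e else 0 where
  nonneg e := by split_ifs <;> simp [hx.nonneg e]
  eq_zero_of_notMem e he := by
    split_ifs with hP
    · exact hx.eq_zero_of_notMem e fun heH => he (mem_filter.2 ⟨heH, hP⟩)
    · rfl
  degree_le_one t v :=
    (degree_mono fun e => by split_ifs <;> simp [hx.nonneg e]).trans (hx.degree_le_one t v)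

theorem sum_meeting_add_le (hx : IsFractionalMatching H x) (e₀ : ∀ t, Fin (a t)) :
    ∑ e with ∃ t, e t = e₀ t, x e + ((d : ℝ) - 1) * x e₀ ≤ d := by
  have hterm e : ((if ∃ t, e t = e₀ t then x e else 0) +
      if e = e₀ then ((d : ℝ) - 1) * x e₀ else 0) ≤ #{t | e t = e₀ t} * x e := by
    rcases eq_or_ne e e₀ with rfl | hne
    · simp only [exists_const_iff, and_true, ↓reduceIte, filter_true, card_univ, Fintype.card_fin]
      split_ifs <;> linarith [hx.nonneg e]
    · by_cases hmeet : ∃ t, e t = e₀ t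
      · have : (1 : ℝ) ≤ #{t | e t = e₀ t} := by
          exact_mod_cast card_pos.2 (by simpa [Finset.Nonempty] using hmeet)
        simp only [hmeet, hne, if_true, if_false, add_zero]
        nlinarith [hx.nonneg e]
      · simp only [hmeet, hne, if_false, add_zero]
        exact mul_nonneg (Nat.cast_nonneg _) (hx.nonneg e)
  calc ∑ e with ∃ t, e t = e₀ t, x e + ((d : ℝ) - 1) * x e₀
      = ∑ e, ((if ∃ t, e t = e₀ t then x e else 0) +
          if e = e₀ then ((d : ℝ) - 1) * x e₀ else 0) := by
        rw [sum_add_distrib, sum_filter, sum_ite_eq']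
        simp
    _ ≤ ∑ e, (#{t | e t = e₀ t} : ℝ) * x e := sum_le_sum fun e _ => hterm e
    _ = ∑ t, degree x t (e₀ t) := by
        simp only [degree]
        rw [sum_comm]
        refine sum_congr rfl fun e _ => ?_
        rw [← sum_filter, sum_const, nsmul_eq_mul]
    _ ≤ ∑ _t : Fin d, 1 := sum_le_sum fun t _ => hx.degree_le_one t (e₀ t)
    _ = d := by simp

theorem exists_isMatching (hd : 2 ≤ d) (k : ℕ) (hx : IsFractionalMatching H x)
    (hk : ((k : ℝ) - 1) * ((d : ℝ) - 1) < ∑ e, x e) : ∃ M, IsMatching H M ∧ k ≤ #M := by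
  induction k generalizing H x with
  | zero => exact ⟨∅, ⟨empty_subset H, by simp⟩, le_rfl⟩
  | succ k ih =>
    have hd1 : (1 : ℝ) ≤ d - 1 := by
      have : (2 : ℝ) ≤ d := by exact_mod_cast hd
      linarith
    push_cast at hk
    obtain ⟨y, hy, hxy, e₀, he₀⟩ :=
      hx.exists_heavy_edge hd (by nlinarith [k.cast_nonneg (α := ℝ)])
    have he₀H : e₀ ∈ H := by
      by_contra h
      rw [hy.eq_zero_of_notMem e₀ h, mul_zero] at he₀
      linarith
    let P (e : ∀ t, Fin (a t)) : Prop := ∀ t, e t ≠ e₀ t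
    have hsplit : ∑ e, (if P e then y e else 0) + ∑ e with ∃ t, e t = e₀ t, y e = ∑ e, y e := by
      rw [← sum_filter, ← sum_filter_add_sum_filter_not univ P]
      simp [P]
    obtain ⟨M, hM, hkM⟩ := ih (hy.filter P) (by linarith [hy.sum_meeting_add_le e₀])
    have he₀M : e₀ ∉ M := fun h => (mem_filter.1 (hM.1 h)).2 ⟨0, by omega⟩ rfl
    refine ⟨insert e₀ M, (hM.mono (filter_subset _ _)).insert he₀H fun e he =>
      (mem_filter.1 (hM.1 he)).2, ?_⟩
    rw [card_insert_of_notMem he₀M]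
    omega

end IsFractionalMatching

theorem IsBalanced.degree_eq {H : Finset (∀ t, Fin (a t))} {f : (∀ t, Fin (a t)) → ℝ}
    (hf : IsBalanced H f) (t : Fin d) (v : Fin (a t)) :
    degree f t v = (∑ e, f e) / a t := by
  have hat : (a t : ℝ) ≠ 0 := by
    have := v.pos
    positivity
  rw [eq_div_iff hat, ← sum_degree f t, sum_congr rfl fun w _ => hf.2.2 t w v, sum_const,
    card_univ, Fintype.card_fin, nsmul_eq_mul, mul_comm]

theorem IsBalanced.exists_isFractionalMatching {H : Finset (∀ t, Fin (a t))}
    {f : (∀ t, Fin (a t)) → ℝ} (hf : IsBalanced H f) (hf0 : f ≠ 0) {c : ℝ} (hc0 : 0 ≤ c)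
    (hc : ∀ t, c ≤ a t) : ∃ x, IsFractionalMatching H x ∧ ∑ e, x e = c := by
  have hpos : 0 < ∑ e, f e := by
    obtain ⟨e, he⟩ := Function.ne_iff.1 hf0
    exact sum_pos' (fun e _ => hf.1 e) ⟨e, mem_univ e, (hf.1 e).lt_of_ne' he⟩
  refine ⟨(c / ∑ e, f e) • f, ⟨fun e => ?_, fun e he => ?_, fun t v => ?_⟩, ?_⟩
  · exact mul_nonneg (div_nonneg hc0 hpos.le) (hf.1 e)
  · simp [hf.2.1 e he]
  · have := v.pos
    rw [degree_smul, hf.degree_eq, div_mul_div_cancel₀ hpos.ne', div_le_one (by positivity)]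
    exact hc t
  · simp [← mul_sum, div_mul_cancel₀ _ hpos.ne']

theorem furedi_general (d : ℕ) (hd : 2 ≤ d) (a : Fin d → ℕ)
    (H : Finset (∀ t, Fin (a t))) (hH : FracBalanced H) :
    ∃ M, IsMatching H M ∧ M.card = ⌈((⨅ t, a t : ℕ) : ℝ) / ((d : ℝ) - 1)⌉₊ := by
  obtain ⟨f, hf, hf0⟩ := hH
  set n := ⨅ t, a t
  obtain ⟨x, hx, hxn⟩ := hf.exists_isFractionalMatching hf0 n.cast_nonneg fun t => by
    exact_mod_cast ciInf_le' a t
  have hd1 : (0 : ℝ) < d - 1 := by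
    have : (2 : ℝ) ≤ d := by exact_mod_cast hd
    linarith
  have hk : ((⌈(n : ℝ) / (d - 1)⌉₊ : ℝ) - 1) * (d - 1) < ∑ e, x e := by
    rw [hxn, ← lt_div_iff₀ hd1, sub_lt_iff_lt_add]
    exact Nat.ceil_lt_add_one (by positivity)
  obtain ⟨M, hM, hkM⟩ := hx.exists_isMatching hd _ hk
  obtain ⟨M', hM'M, hM'⟩ := exists_subset_card_eq hkM
  exact ⟨M', hM.subset hM'M, hM'⟩

/-- Füredi's theorem: every `(a 1, …, a d)`-fractionally balanced `d`-partite
hypergraph (`d ≥ 2`, all sides nonempty) has a matching of size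
`⌈(min_t a t)/(d-1)⌉`. -/
theorem furedi (d : ℕ) (hd : 2 ≤ d) (a : Fin d → ℕ) (ha : ∀ t, 0 < a t)
    (H : Finset (∀ t, Fin (a t))) (hH : FracBalanced H) :
    ∃ M, IsMatching H M ∧ M.card = ⌈((⨅ t, a t : ℕ) : ℝ) / ((d : ℝ) - 1)⌉₊ :=
  furedi_general d hd a H hH
end

section
/- For every integer n ≥ 1: (i) every (n,n,n)-fractionally balanced tripartite hypergraph contains a matching of size ⌈n/2⌉, and (ii) there exists an (n,n,n)-fractionally balanced tripartite hypergraph whose matching number equals ⌈n/2⌉. -/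
/-- `f` is a balanced weight function on the tripartite hypergraph `H`:
nonnegative, vanishing outside `H`, with constant degrees on each of the three sides. -/
def TriBalanced {a b c : ℕ} (H : Finset (Fin a × Fin b × Fin c))
    (f : Fin a × Fin b × Fin c → ℝ) : Prop :=
  (∀ e, 0 ≤ f e) ∧ (∀ e, e ∉ H → f e = 0) ∧
    (∀ v w : Fin a, (∑ e : Fin a × Fin b × Fin c, if e.1 = v then f e else 0) =
      ∑ e : Fin a × Fin b × Fin c, if e.1 = w then f e else 0) ∧
    (∀ v w : Fin b, (∑ e : Fin a × Fin b × Fin c, if e.2.1 = v then f e else 0) =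
      ∑ e : Fin a × Fin b × Fin c, if e.2.1 = w then f e else 0) ∧
    (∀ v w : Fin c, (∑ e : Fin a × Fin b × Fin c, if e.2.2 = v then f e else 0) =
      ∑ e : Fin a × Fin b × Fin c, if e.2.2 = w then f e else 0)

/-- `H` is an `(a,b,c)`-fractionally balanced tripartite hypergraph. -/
def TriFracBalanced {a b c : ℕ} (H : Finset (Fin a × Fin b × Fin c)) : Prop :=
  ∃ f, TriBalanced H f ∧ f ≠ 0

/-- `M` is a matching in `H`: a set of edges of `H` any two distinct members of
which differ in all three coordinates. -/
def TriMatching {a b c : ℕ} (H M : Finset (Fin a × Fin b × Fin c)) : Prop :=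
  M ⊆ H ∧ ∀ e ∈ M, ∀ f ∈ M, e ≠ f → e.1 ≠ f.1 ∧ e.2.1 ≠ f.2.1 ∧ e.2.2 ≠ f.2.2

/-!
Part (i) is Füredi's bound `ν* ≤ 2ν` for 3-partite hypergraphs. A nonzero balanced weight `w`
has all degrees equal to `d = (∑ w) / n`, so it suffices to find a matching `M` with
`∑ w ≤ 2 |M| d`. Take `M` maximum and, among maximum matchings, heaviest, and let `t f` be the
number of vertices `f` shares with edges of `M`. Double counting over the vertices of `M` gives
`∑ w t ≤ 3 |M| d`. By maximality every edge meets `M`; an edge meeting two edges of `M` has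
`t ≥ 2`, and the edges meeting only `e ∈ M` form, by exchange arguments, an intersecting family
in which `e` is heaviest, whose `(2 - t)`-weighted total is at most `d`. Hence
`2 ∑ w ≤ |M| d + 3 |M| d`.

For part (ii), group each side into blocks `{2k, 2k+1}` and inside each block take the triples
with even coordinate sum, with weight `1 / |block|`. Two such triples in one block always meet,
so a matching uses every block at most once.
-/

open Finset

namespace Tripartite

section Degrees

variable {E V : Type*} [Fintype E] [DecidableEq V]

def sideDeg (π : E → V) (w : E → ℝ) (v : V) : ℝ :=
  ∑ e, if π e = v then w e else 0

lemma sum_le_sideDeg {π : E → V} {w : E → ℝ} (hw : ∀ e, 0 ≤ w e) {S : Finset E} {v : V}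
    (hS : ∀ e ∈ S, π e = v) : ∑ e ∈ S, w e ≤ sideDeg π w v := by
  rw [sideDeg, ← sum_filter]
  exact sum_le_sum_of_subset_of_nonneg (fun e he => mem_filter.2 ⟨mem_univ e, hS e he⟩)
    fun e _ _ => hw e

lemma sum_sideDeg [Fintype V] (π : E → V) (w : E → ℝ) : ∑ v, sideDeg π w v = ∑ e, w e := by
  simp only [sideDeg]
  rw [sum_comm]
  simp

lemma sideDeg_eq_sum_div_card [Fintype V] {π : E → V} {w : E → ℝ}
    (h : ∀ v v', sideDeg π w v = sideDeg π w v') (v : V) :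
    sideDeg π w v = (∑ e, w e) / Fintype.card V := by
  have : Nonempty V := ⟨v⟩
  rw [← sum_sideDeg π w, sum_congr rfl fun v' _ => h v' v, sum_const, card_univ, nsmul_eq_mul,
    mul_div_cancel_left₀ _ (by positivity)]

lemma sum_add_sum_le_of_cross_eq [DecidableEq E] {π : E → V} {w : E → ℝ} {d : ℝ}
    (hw : ∀ e, 0 ≤ w e) (hd : ∀ v, sideDeg π w v ≤ d)
    {P Q : Finset E} (hPQ : Disjoint P Q) (hP : ∑ f ∈ P, w f ≤ d) (hQ : ∑ f ∈ Q, w f ≤ d)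
    (h : ∀ f ∈ P, ∀ g ∈ Q, π f = π g) : ∑ f ∈ P, w f + ∑ f ∈ Q, w f ≤ d := by
  rcases P.eq_empty_or_nonempty with rfl | ⟨f₀, hf₀⟩
  · simpa using hQ
  rcases Q.eq_empty_or_nonempty with rfl | ⟨g₀, hg₀⟩
  · simpa using hP
  rw [← sum_union hPQ]
  refine (sum_le_sideDeg hw fun f hf => ?_).trans (hd (π g₀))
  rcases mem_union.1 hf with hf | hf
  · exact h f hf g₀ hg₀
  · exact (h f₀ hf₀ f hf).symm.trans (h f₀ hf₀ g₀ hg₀)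

end Degrees

variable {a b c : ℕ}

def MaxDegreeLE (w : Fin a × Fin b × Fin c → ℝ) (d : ℝ) : Prop :=
  (∀ v, sideDeg Prod.fst w v ≤ d) ∧ (∀ v, sideDeg (fun e => e.2.1) w v ≤ d) ∧
    ∀ v, sideDeg (fun e => e.2.2) w v ≤ d

def TriApart (e f : Fin a × Fin b × Fin c) : Prop :=
  e.1 ≠ f.1 ∧ e.2.1 ≠ f.2.1 ∧ e.2.2 ≠ f.2.2

instance : DecidableRel (@TriApart a b c) := fun _ _ => inferInstanceAs (Decidable (_ ∧ _ ∧ _))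

instance : Std.Symm (@TriApart a b c) :=
  ⟨fun _ _ h => ⟨h.1.symm, h.2.1.symm, h.2.2.symm⟩⟩

lemma not_triApart_self (e : Fin a × Fin b × Fin c) : ¬TriApart e e := fun h => h.1 rfl

lemma notMem_of_forall_triApart {M : Finset (Fin a × Fin b × Fin c)} {f : Fin a × Fin b × Fin c}
    (h : ∀ e ∈ M, TriApart e f) : f ∉ M := fun hf => not_triApart_self f (h f hf)

lemma triMatching_iff {H M : Finset (Fin a × Fin b × Fin c)} :
    TriMatching H M ↔ M ⊆ H ∧ (M : Set (Fin a × Fin b × Fin c)).Pairwise TriApart :=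
  Iff.rfl

lemma _root_.TriMatching.mono {H M N : Finset (Fin a × Fin b × Fin c)} (hM : TriMatching H M)
    (hN : N ⊆ M) : TriMatching H N :=
  triMatching_iff.2 ⟨hN.trans hM.1, (triMatching_iff.1 hM).2.mono (coe_subset.2 hN)⟩

lemma _root_.TriMatching.insert {H M : Finset (Fin a × Fin b × Fin c)} {f : Fin a × Fin b × Fin c}
    (hM : TriMatching H M) (hf : f ∈ H) (hfM : ∀ e ∈ M, TriApart e f) :
    TriMatching H (insert f M) := by
  rw [triMatching_iff, coe_insert, Set.pairwise_insert_of_symm]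
  exact ⟨insert_subset hf hM.1, (triMatching_iff.1 hM).2, fun e he _ => symm (hfM e he)⟩

def overlap (e f : Fin a × Fin b × Fin c) : ℕ :=
  (if e.1 = f.1 then 1 else 0) + (if e.2.1 = f.2.1 then 1 else 0) +
    if e.2.2 = f.2.2 then 1 else 0

lemma overlap_eq_zero_iff {e f : Fin a × Fin b × Fin c} : overlap e f = 0 ↔ TriApart e f := by
  simp [overlap, TriApart, and_assoc]

lemma overlap_self (e : Fin a × Fin b × Fin c) : overlap e e = 3 := by
  simp [overlap]

lemma sum_mul_overlap (w : Fin a × Fin b × Fin c → ℝ) (e : Fin a × Fin b × Fin c) :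
    ∑ f, w f * overlap e f =
      sideDeg Prod.fst w e.1 + sideDeg (fun f => f.2.1) w e.2.1 +
        sideDeg (fun f => f.2.2) w e.2.2 := by
  simp only [overlap, sideDeg, Nat.cast_add, Nat.cast_ite, Nat.cast_one, Nat.cast_zero, mul_add,
    mul_ite, mul_one, mul_zero, sum_add_distrib, eq_comm]

lemma sum_meet_once_le {w : Fin a × Fin b × Fin c → ℝ} {d : ℝ} (hw : ∀ f, 0 ≤ w f)
    (hd : MaxDegreeLE w d) {G : Finset (Fin a × Fin b × Fin c)} {e : Fin a × Fin b × Fin c}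
    (hG : ∀ f ∈ G, ∀ g ∈ G, ¬TriApart f g) (hmax : ∀ f ∈ G, w f ≤ w e) :
    ∑ f ∈ G with f.1 = e.1 ∧ f.2.1 ≠ e.2.1 ∧ f.2.2 ≠ e.2.2, w f +
      ∑ f ∈ G with f.1 ≠ e.1 ∧ f.2.1 = e.2.1 ∧ f.2.2 ≠ e.2.2, w f +
      ∑ f ∈ G with f.1 ≠ e.1 ∧ f.2.1 ≠ e.2.1 ∧ f.2.2 = e.2.2, w f ≤ d + w e := by
  set Sa := G.filter fun f => f.1 = e.1 ∧ f.2.1 ≠ e.2.1 ∧ f.2.2 ≠ e.2.2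
  set Sb := G.filter fun f => f.1 ≠ e.1 ∧ f.2.1 = e.2.1 ∧ f.2.2 ≠ e.2.2
  set Sc := G.filter fun f => f.1 ≠ e.1 ∧ f.2.1 ≠ e.2.1 ∧ f.2.2 = e.2.2
  have hab : ∀ f ∈ Sa, ∀ g ∈ Sb, f.2.2 = g.2.2 := fun f hf g hg => by
    simp only [Sa, Sb, mem_filter] at hf hg
    grind [TriApart, hG f hf.1 g hg.1]
  have hac : ∀ f ∈ Sa, ∀ g ∈ Sc, f.2.1 = g.2.1 := fun f hf g hg => by
    simp only [Sa, Sc, mem_filter] at hf hg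
    grind [TriApart, hG f hf.1 g hg.1]
  have hbc : ∀ f ∈ Sb, ∀ g ∈ Sc, f.1 = g.1 := fun f hf g hg => by
    simp only [Sb, Sc, mem_filter] at hf hg
    grind [TriApart, hG f hf.1 g hg.1]
  have hSa : ∑ f ∈ Sa, w f ≤ d :=
    (sum_le_sideDeg hw fun f hf => (mem_filter.1 hf).2.1).trans (hd.1 e.1)
  have hSb : ∑ f ∈ Sb, w f ≤ d :=
    (sum_le_sideDeg hw fun f hf => (mem_filter.1 hf).2.2.1).trans (hd.2.1 e.2.1)
  have hSc : ∑ f ∈ Sc, w f ≤ d :=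
    (sum_le_sideDeg hw fun f hf => (mem_filter.1 hf).2.2.2).trans (hd.2.2 e.2.2)
  have hwe := hw e
  rcases Sa.eq_empty_or_nonempty with ha | ⟨f₀, hf₀⟩
  · rw [ha, sum_empty]
    linarith [sum_add_sum_le_of_cross_eq hw hd.1
      (disjoint_filter.2 fun _ _ h h' => h'.2.1 h.2.1) hSb hSc hbc]
  rcases Sb.eq_empty_or_nonempty with hb | ⟨g₀, hg₀⟩
  · rw [hb, sum_empty]
    linarith [sum_add_sum_le_of_cross_eq hw hd.2.1
      (disjoint_filter.2 fun _ _ h h' => h'.1 h.1) hSa hSc hac]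
  -- an edge of `Sc` meets `g₀` in its first and `f₀` in its second coordinate
  have hSc_card : #Sc ≤ 1 := card_le_one.2 fun h hh h' hh' => Prod.ext
    ((hbc g₀ hg₀ h hh).symm.trans (hbc g₀ hg₀ h' hh'))
    (Prod.ext ((hac f₀ hf₀ h hh).symm.trans (hac f₀ hf₀ h' hh'))
      (((mem_filter.1 hh).2.2.2).trans (mem_filter.1 hh').2.2.2.symm))
  have hSc_le : ∑ f ∈ Sc, w f ≤ w e := by
    refine (sum_le_card_nsmul Sc w (w e) fun f hf => hmax f (mem_filter.1 hf).1).trans ?_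
    rw [nsmul_eq_mul]
    exact mul_le_of_le_one_left hwe (by exact_mod_cast hSc_card)
  linarith [sum_add_sum_le_of_cross_eq hw hd.2.2
    (disjoint_filter.2 fun _ _ h h' => h'.1 h.1) hSa hSb hab]

theorem sum_mul_two_sub_overlap_le {w : Fin a × Fin b × Fin c → ℝ} {d : ℝ}
    (hw : ∀ f, 0 ≤ w f) (hd : MaxDegreeLE w d) {G : Finset (Fin a × Fin b × Fin c)}
    {e : Fin a × Fin b × Fin c} (hG : ∀ f ∈ G, ∀ g ∈ G, ¬TriApart f g) (he : e ∈ G)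
    (hmax : ∀ f ∈ G, w f ≤ w e) :
    ∑ f ∈ G, w f * (2 - overlap e f) ≤ d := by
  -- pointwise, `2 - overlap e f` is `1` if `f` meets `e` once, `0` if twice, `-1` if `f = e`
  refine le_trans ?_ (sub_le_iff_le_add.2 (sum_meet_once_le hw hd hG hmax))
  have hGe : ∑ f ∈ G, (if e = f then w f else 0) = w e := by rw [sum_ite_eq, if_pos he]
  rw [sum_filter, sum_filter, sum_filter, ← hGe, ← sum_add_distrib, ← sum_add_distrib,
    ← sum_sub_distrib]
  refine sum_le_sum fun f hf => ?_
  rcases eq_or_ne e f with rfl | hef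
  · simp only [overlap_self]
    norm_num
  have hmeet := hG e he f hf
  have := hw f
  simp only [overlap, TriApart, if_neg hef] at hmeet ⊢
  by_cases h1 : e.1 = f.1 <;> by_cases h2 : e.2.1 = f.2.1 <;> by_cases h3 : e.2.2 = f.2.2 <;>
    simp [h1, h2, h3, Ne.symm] at hmeet ⊢ <;> linarith

structure IsHeaviestMaxMatching (H : Finset (Fin a × Fin b × Fin c))
    (w : Fin a × Fin b × Fin c → ℝ) (M : Finset (Fin a × Fin b × Fin c)) : Prop where
  triMatching : TriMatching H M
  lex_le : ∀ N, TriMatching H N → toLex (#N, ∑ e ∈ N, w e) ≤ toLex (#M, ∑ e ∈ M, w e)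

lemma exists_isHeaviestMaxMatching (H : Finset (Fin a × Fin b × Fin c))
    (w : Fin a × Fin b × Fin c → ℝ) : ∃ M, IsHeaviestMaxMatching H w M := by
  classical
  obtain ⟨M, hM, hmax⟩ := (H.powerset.filter (TriMatching H)).exists_max_image
    (fun N => toLex (#N, ∑ e ∈ N, w e)) ⟨∅, by simp [TriMatching]⟩
  exact ⟨M, (mem_filter.1 hM).2, fun N hN => hmax N (mem_filter.2 ⟨mem_powerset.2 hN.1, hN⟩)⟩

def privateEdges (H M : Finset (Fin a × Fin b × Fin c)) (e : Fin a × Fin b × Fin c) :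
    Finset (Fin a × Fin b × Fin c) :=
  H.filter fun f => ∀ e' ∈ M.erase e, TriApart e' f

lemma privateEdges_subset (H M : Finset (Fin a × Fin b × Fin c)) (e : Fin a × Fin b × Fin c) :
    privateEdges H M e ⊆ H :=
  filter_subset _ _

namespace IsHeaviestMaxMatching

variable {H M : Finset (Fin a × Fin b × Fin c)} {w : Fin a × Fin b × Fin c → ℝ}
  {e f : Fin a × Fin b × Fin c}

lemma exists_not_triApart (hM : IsHeaviestMaxMatching H w M) (hf : f ∈ H) :
    ∃ e ∈ M, ¬TriApart e f := by
  by_contra! hfM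
  have := hM.lex_le _ (hM.triMatching.insert hf hfM)
  rw [card_insert_of_notMem (notMem_of_forall_triApart hfM), Prod.Lex.toLex_le_toLex] at this
  omega

lemma self_mem_privateEdges (hM : IsHeaviestMaxMatching H w M) (he : e ∈ M) :
    e ∈ privateEdges H M e :=
  mem_filter.2 ⟨hM.triMatching.1 he, fun e' he' => hM.triMatching.2 e' (mem_of_mem_erase he') e he
    (ne_of_mem_erase he')⟩

lemma le_of_mem_privateEdges (hM : IsHeaviestMaxMatching H w M) (he : e ∈ M)
    (hf : f ∈ privateEdges H M e) : w f ≤ w e := by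
  obtain ⟨hfH, hfM⟩ := mem_filter.1 hf
  have hfM' := notMem_of_forall_triApart hfM
  have := hM.lex_le _ ((hM.triMatching.mono (erase_subset e M)).insert hfH hfM)
  rw [card_insert_of_notMem hfM', sum_insert hfM', card_erase_add_one he,
    ← sum_erase_add _ _ he, Prod.Lex.toLex_le_toLex] at this
  rcases this with h | h
  · omega
  · linarith [h.2]

lemma not_triApart (hM : IsHeaviestMaxMatching H w M) (he : e ∈ M) :
    ∀ f ∈ privateEdges H M e, ∀ g ∈ privateEdges H M e, ¬TriApart f g := by
  intro f hf g hg hfg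
  obtain ⟨hfH, hfM⟩ := mem_filter.1 hf
  obtain ⟨hgH, hgM⟩ := mem_filter.1 hg
  have hgN : ∀ e' ∈ insert g (M.erase e), TriApart e' f := by
    simpa [symm hfg] using hfM
  have := hM.lex_le _ (((hM.triMatching.mono (erase_subset e M)).insert hgH hgM).insert hfH hgN)
  rw [card_insert_of_notMem (notMem_of_forall_triApart hgN),
    card_insert_of_notMem (notMem_of_forall_triApart hgM), card_erase_add_one he,
    Prod.Lex.toLex_le_toLex] at this
  omega

lemma two_sub_sum_overlap_le (hM : IsHeaviestMaxMatching H w M) (hf : f ∈ H) :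
    2 - ∑ e ∈ M, (overlap e f : ℝ) ≤
      ∑ e ∈ M, if f ∈ privateEdges H M e then 2 - (overlap e f : ℝ) else 0 := by
  obtain ⟨e, he, hef⟩ := hM.exists_not_triApart hf
  by_cases hpriv : f ∈ privateEdges H M e
  · have hothers : ∀ e' ∈ M, e' ≠ e → f ∉ privateEdges H M e' := fun e' _ hne hpriv' =>
      hef ((mem_filter.1 hpriv').2 e (mem_erase.2 ⟨hne.symm, he⟩))
    rw [sum_eq_single_of_mem e he fun e' he' hne => ?_,
      sum_eq_single_of_mem e he fun e' he' hne => if_neg (hothers e' he' hne), if_pos hpriv]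
    rw [overlap_eq_zero_iff.2 ((mem_filter.1 hpriv).2 e' (mem_erase.2 ⟨hne, he'⟩)), Nat.cast_zero]
  · have : ¬∀ e' ∈ M.erase e, TriApart e' f := fun h => hpriv (mem_filter.2 ⟨hf, h⟩)
    push Not at this
    obtain ⟨e', he', he'f⟩ := this
    have hnone : ∀ e'' ∈ M, f ∉ privateEdges H M e'' := by
      intro e'' he'' hpriv''
      rcases eq_or_ne e'' e with rfl | hne
      · exact hpriv hpriv''
      · exact hef ((mem_filter.1 hpriv'').2 e (mem_erase.2 ⟨hne.symm, he⟩))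
    have hone : ∀ e'', ¬TriApart e'' f → (1 : ℝ) ≤ overlap e'' f := fun e'' h => by
      exact_mod_cast Nat.one_le_iff_ne_zero.2 (mt overlap_eq_zero_iff.1 h)
    have hpair : (overlap e f : ℝ) + overlap e' f ≤ ∑ x ∈ M, (overlap x f : ℝ) :=
      calc (overlap e f : ℝ) + overlap e' f = ∑ x ∈ {e, e'}, (overlap x f : ℝ) :=
            (sum_pair (f := fun x => (overlap x f : ℝ)) (ne_of_mem_erase he').symm).symm
        _ ≤ ∑ x ∈ M, (overlap x f : ℝ) := sum_le_sum_of_subset_of_nonneg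
            (insert_subset he (singleton_subset_iff.2 (mem_of_mem_erase he')))
            fun _ _ _ => by positivity
    rw [sum_eq_zero fun e'' he'' => if_neg (hnone e'' he'')]
    linarith [hone e hef, hone e' he'f]

end IsHeaviestMaxMatching

theorem exists_triMatching_sum_le (H : Finset (Fin a × Fin b × Fin c))
    {w : Fin a × Fin b × Fin c → ℝ} {d : ℝ} (hw : ∀ e, 0 ≤ w e) (hd : MaxDegreeLE w d) :
    ∃ M, TriMatching H M ∧ ∑ f ∈ H, w f ≤ 2 * #M * d := by
  obtain ⟨M, hM⟩ := exists_isHeaviestMaxMatching H w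
  set t : Fin a × Fin b × Fin c → ℝ := fun f => ∑ e ∈ M, (overlap e f : ℝ)
  have hcover : ∑ f ∈ H, w f * t f ≤ 3 * #M * d :=
    calc ∑ f ∈ H, w f * t f ≤ ∑ f, w f * t f :=
          sum_le_univ_sum_of_nonneg fun f => mul_nonneg (hw f) (by positivity)
      _ = ∑ e ∈ M, ∑ f, w f * overlap e f := by simp only [t, mul_sum]; exact sum_comm
      _ ≤ ∑ e ∈ M, 3 * d := sum_le_sum fun e _ => by
          rw [sum_mul_overlap]; linarith [hd.1 e.1, hd.2.1 e.2.1, hd.2.2 e.2.2]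
      _ = 3 * #M * d := by rw [sum_const, nsmul_eq_mul]; ring
  have hprivate : ∑ f ∈ H, w f * (2 - t f) ≤ #M * d :=
    calc ∑ f ∈ H, w f * (2 - t f)
        ≤ ∑ f ∈ H, ∑ e ∈ M, if f ∈ privateEdges H M e then w f * (2 - overlap e f) else 0 :=
          sum_le_sum fun f hf => by
            simp only [← mul_ite_zero, ← mul_sum]
            exact mul_le_mul_of_nonneg_left (hM.two_sub_sum_overlap_le hf) (hw f)
      _ = ∑ e ∈ M, ∑ f ∈ privateEdges H M e, w f * (2 - overlap e f) := by
          rw [sum_comm]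
          refine sum_congr rfl fun e _ => ?_
          rw [sum_ite_mem, inter_eq_right.2 (privateEdges_subset H M e)]
      _ ≤ ∑ e ∈ M, d := sum_le_sum fun e he =>
          sum_mul_two_sub_overlap_le hw hd (hM.not_triApart he) (hM.self_mem_privateEdges he)
            fun f hf => hM.le_of_mem_privateEdges he hf
      _ = #M * d := by rw [sum_const, nsmul_eq_mul]
  have hsplit : 2 * ∑ f ∈ H, w f = ∑ f ∈ H, w f * (2 - t f) + ∑ f ∈ H, w f * t f := by
    rw [← sum_add_distrib, mul_sum]
    exact sum_congr rfl fun f _ => by ring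
  exact ⟨M, hM.triMatching, by linarith⟩

lemma sideDeg_fst (w : Fin a × Fin b × Fin c → ℝ) (v : Fin a) :
    sideDeg Prod.fst w v = ∑ y, ∑ z, w (v, y, z) := by
  rw [sideDeg, Fintype.sum_prod_type,
    Fintype.sum_eq_single v fun x hx => sum_eq_zero fun p _ => if_neg hx]
  simp [Fintype.sum_prod_type]

lemma sideDeg_snd_fst (w : Fin a × Fin b × Fin c → ℝ) (v : Fin b) :
    sideDeg (fun e => e.2.1) w v = ∑ x, ∑ z, w (x, v, z) := by
  simp only [sideDeg, Fintype.sum_prod_type]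
  refine sum_congr rfl fun x _ => ?_
  rw [Fintype.sum_eq_single v fun y hy => sum_eq_zero fun z _ => if_neg hy]
  simp

lemma sideDeg_snd_snd (w : Fin a × Fin b × Fin c → ℝ) (v : Fin c) :
    sideDeg (fun e => e.2.2) w v = ∑ x, ∑ y, w (x, y, v) := by
  simp [sideDeg, Fintype.sum_prod_type]

theorem _root_.TriFracBalanced.exists_triMatching {H : Finset (Fin a × Fin b × Fin c)}
    (hH : TriFracBalanced H) : ∃ M, TriMatching H M ∧ min a (min b c) ≤ 2 * #M := by
  obtain ⟨f, ⟨hf0, hfH, hA, hB, hC⟩, hf⟩ := hH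
  obtain ⟨e₀, he₀⟩ : ∃ e, f e ≠ 0 := by
    by_contra! h
    exact hf (funext h)
  set T := ∑ e, f e
  set m := min a (min b c)
  have hm : 0 < m := lt_min e₀.1.pos (lt_min e₀.2.1.pos e₀.2.2.pos)
  have hT : 0 < T := (lt_of_le_of_ne (hf0 e₀) (Ne.symm he₀)).trans_le
    (single_le_sum (fun e _ => hf0 e) (mem_univ e₀))
  have hdeg {k : ℕ} (hk : m ≤ k) : T / k ≤ T / m :=
    div_le_div_of_nonneg_left hT.le (by positivity) (by exact_mod_cast hk)
  have hd : MaxDegreeLE f (T / m) := by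
    refine ⟨fun v => ?_, fun v => ?_, fun v => ?_⟩
    · rw [sideDeg_eq_sum_div_card hA v, Fintype.card_fin]
      exact hdeg (min_le_left _ _)
    · rw [sideDeg_eq_sum_div_card hB v, Fintype.card_fin]
      exact hdeg ((min_le_right _ _).trans (min_le_left _ _))
    · rw [sideDeg_eq_sum_div_card hC v, Fintype.card_fin]
      exact hdeg ((min_le_right _ _).trans (min_le_right _ _))
  obtain ⟨M, hM, hsum⟩ := exists_triMatching_sum_le H hf0 hd
  rw [sum_subset (subset_univ H) fun e _ he => hfH e he, mul_div_assoc',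
    le_div_iff₀ (by positivity)] at hsum
  have hle : (m : ℝ) ≤ 2 * #M := le_of_mul_le_mul_left (by linarith) hT
  exact ⟨M, hM, by exact_mod_cast hle⟩

theorem _root_.TriFracBalanced.exists_triMatching_card_eq {n : ℕ}
    {H : Finset (Fin n × Fin n × Fin n)} (hH : TriFracBalanced H) :
    ∃ M, TriMatching H M ∧ #M = (n + 1) / 2 := by
  obtain ⟨M, hM, hcard⟩ := hH.exists_triMatching
  rw [min_self, min_self] at hcard
  obtain ⟨N, hNM, hN⟩ := exists_subset_card_eq (s := M) (n := (n + 1) / 2) (by omega)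
  exact ⟨N, hM.mono hNM, hN⟩

variable {n : ℕ}

def blockOf (x : Fin n) : Finset (Fin n) :=
  univ.filter fun y => y.val / 2 = x.val / 2

lemma blockOf_congr {x y : Fin n} (h : x.val / 2 = y.val / 2) : blockOf x = blockOf y := by
  simp only [blockOf, h]

lemma mem_blockOf_self (x : Fin n) : x ∈ blockOf x := by
  simp [blockOf]

def parityHypergraph (n : ℕ) : Finset (Fin n × Fin n × Fin n) :=
  univ.filter fun e => e.1.val / 2 = e.2.1.val / 2 ∧ e.2.1.val / 2 = e.2.2.val / 2 ∧
    (e.1.val + e.2.1.val + e.2.2.val) % 2 = 0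

lemma mem_parityHypergraph {e : Fin n × Fin n × Fin n} :
    e ∈ parityHypergraph n ↔ e.1.val / 2 = e.2.1.val / 2 ∧ e.2.1.val / 2 = e.2.2.val / 2 ∧
      (e.1.val + e.2.1.val + e.2.2.val) % 2 = 0 := by
  simp [parityHypergraph]

/-- `1/2` on the four edges of a block `{2k, 2k+1}`, and `1` on the edge `(n-1, n-1, n-1)` of
the singleton block `{n-1}` when `n` is odd. -/
noncomputable def parityWeight (n : ℕ) (e : Fin n × Fin n × Fin n) : ℝ :=
  if e ∈ parityHypergraph n then (#(blockOf e.1) : ℝ)⁻¹ else 0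

lemma parityWeight_swap_fst_snd (x y z : Fin n) :
    parityWeight n (x, y, z) = parityWeight n (y, x, z) := by
  simp only [parityWeight, mem_parityHypergraph]
  by_cases h : x.val / 2 = y.val / 2 ∧ y.val / 2 = z.val / 2 ∧ (x.val + y.val + z.val) % 2 = 0
  · rw [if_pos h, if_pos (by omega), blockOf_congr h.1]
  · rw [if_neg h, if_neg (by omega)]

lemma parityWeight_swap_fst_thd (x y z : Fin n) :
    parityWeight n (x, y, z) = parityWeight n (z, y, x) := by
  simp only [parityWeight, mem_parityHypergraph]
  by_cases h : x.val / 2 = y.val / 2 ∧ y.val / 2 = z.val / 2 ∧ (x.val + y.val + z.val) % 2 = 0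
  · rw [if_pos h, if_pos (by omega), blockOf_congr (h.1.trans h.2.1)]
  · rw [if_neg h, if_neg (by omega)]

lemma sum_parityWeight_thd (x y : Fin n) :
    ∑ z, parityWeight n (x, y, z) = if y ∈ blockOf x then (#(blockOf x) : ℝ)⁻¹ else 0 := by
  by_cases hy : y ∈ blockOf x
  · have hy' : y.val / 2 = x.val / 2 := (mem_filter.1 hy).2
    -- the parity condition leaves exactly one admissible third coordinate in the block
    let z₀ : Fin n := ⟨2 * (x.val / 2) + (x.val + y.val) % 2, by omega⟩
    rw [if_pos hy, sum_eq_single_of_mem z₀ (mem_univ _) fun z _ hz => ?_]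
    · rw [parityWeight, if_pos (mem_parityHypergraph.2 (by simp only [z₀]; omega))]
    · refine if_neg fun h => hz (Fin.ext ?_)
      simp only [mem_parityHypergraph] at h
      simp only [z₀]
      omega
  · rw [if_neg hy]
    exact sum_eq_zero fun z _ => if_neg fun h => hy (mem_filter.2 ⟨mem_univ _,
      (mem_parityHypergraph.1 h).1.symm⟩)

lemma sum_sum_parityWeight (x : Fin n) : ∑ y, ∑ z, parityWeight n (x, y, z) = 1 := by
  simp only [sum_parityWeight_thd]
  rw [sum_ite_mem, univ_inter, sum_const, nsmul_eq_mul,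
    mul_inv_cancel₀ (by exact_mod_cast (card_pos.2 ⟨x, mem_blockOf_self x⟩).ne')]

lemma sideDeg_fst_parityWeight (v : Fin n) : sideDeg Prod.fst (parityWeight n) v = 1 := by
  rw [sideDeg_fst, sum_sum_parityWeight]

lemma sideDeg_snd_fst_parityWeight (v : Fin n) :
    sideDeg (fun e => e.2.1) (parityWeight n) v = 1 := by
  rw [sideDeg_snd_fst, ← sum_sum_parityWeight v]
  simp only [parityWeight_swap_fst_snd _ v]

lemma sideDeg_snd_snd_parityWeight (v : Fin n) :
    sideDeg (fun e => e.2.2) (parityWeight n) v = 1 := by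
  rw [sideDeg_snd_snd, ← sum_sum_parityWeight v, sum_comm]
  simp only [parityWeight_swap_fst_thd _ _ v]

lemma parityWeight_triBalanced (n : ℕ) : TriBalanced (parityHypergraph n) (parityWeight n) := by
  refine ⟨fun e => ?_, fun e he => if_neg he, fun v v' => ?_, fun v v' => ?_, fun v v' => ?_⟩
  · unfold parityWeight
    split_ifs <;> positivity
  · exact (sideDeg_fst_parityWeight v).trans (sideDeg_fst_parityWeight v').symm
  · exact (sideDeg_snd_fst_parityWeight v).trans (sideDeg_snd_fst_parityWeight v').symm
  · exact (sideDeg_snd_snd_parityWeight v).trans (sideDeg_snd_snd_parityWeight v').symm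

theorem parityHypergraph_triFracBalanced (hn : 0 < n) :
    TriFracBalanced (parityHypergraph n) := by
  refine ⟨parityWeight n, parityWeight_triBalanced n, fun h => ?_⟩
  have := sideDeg_fst_parityWeight (⟨0, hn⟩ : Fin n)
  simp [h, sideDeg] at this

theorem card_le_of_triMatching_parityHypergraph {M : Finset (Fin n × Fin n × Fin n)}
    (hM : TriMatching (parityHypergraph n) M) : #M ≤ (n + 1) / 2 := by
  rw [← card_range ((n + 1) / 2)]
  refine card_le_card_of_injOn (fun e => e.1.val / 2) (fun e _ => ?_) fun e he g hg heg => ?_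
  · simp only [coe_range, Set.mem_Iio]
    omega
  by_contra hne
  obtain ⟨h₁, h₂, h₃⟩ := hM.2 e he g hg hne
  have he' := mem_parityHypergraph.1 (hM.1 he)
  have hg' := mem_parityHypergraph.1 (hM.1 hg)
  have := Fin.val_ne_of_ne h₁
  have := Fin.val_ne_of_ne h₂
  have := Fin.val_ne_of_ne h₃
  -- in a common block, disjoint edges differ in every coordinate, so their sums differ in parity
  simp only at heg
  omega

end Tripartite

/-- For `n ≥ 1`: every `(n,n,n)`-fractionally balanced tripartite hypergraph has a
matching of size `⌈n/2⌉`, and there is such a hypergraph whose matching number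
equals `⌈n/2⌉`. -/
theorem bm_nnn (n : ℕ) (hn : 1 ≤ n) :
    (∀ H : Finset (Fin n × Fin n × Fin n), TriFracBalanced H →
      ∃ M, TriMatching H M ∧ M.card = (n + 1) / 2) ∧
    (∃ H : Finset (Fin n × Fin n × Fin n), TriFracBalanced H ∧
      (∃ M, TriMatching H M ∧ M.card = (n + 1) / 2) ∧
      ∀ M, TriMatching H M → M.card ≤ (n + 1) / 2) := by
  have hpar := Tripartite.parityHypergraph_triFracBalanced hn
  exact ⟨fun H hH => hH.exists_triMatching_card_eq, Tripartite.parityHypergraph n, hpar,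
    hpar.exists_triMatching_card_eq,
    fun M hM => Tripartite.card_le_of_triMatching_parityHypergraph hM⟩
end

section
/- For all positive integers d and a_1,…,a_d, the additive monoid of balanced ℕ-valued functions on Fin a_1 × ⋯ × Fin a_d is finitely generated; that is, the submonoid {w : Fin a_1 × ⋯ × Fin a_d → ℕ | w is balanced} of the monoid of all functions Fin a_1 × ⋯ × Fin a_d → ℕ under pointwise addition is finitely generated. -/
/-!
Each balance condition equates two additive functionals of `w`, so if `x` and `x + y` are balanced
then so is `y`. A submonoid of `ℕ^k` with this cancellation property is generated by its minimal
nonzero elements, of which there are finitely many by Dickson's lemma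
(`AddSubmonoid.fg_of_subtractive`).
-/

/-- The additive submonoid of balanced `ℕ`-valued weight functions on
`Fin (a 0) × ⋯ × Fin (a (d-1))`: those `w` whose degree sums are constant on
every side. -/
def balancedSubmonoid (d : ℕ) (a : Fin d → ℕ) :
    AddSubmonoid ((∀ t, Fin (a t)) → ℕ) where
  carrier := {w | ∀ t : Fin d, ∀ v u : Fin (a t),
    (∑ e : ∀ t, Fin (a t), if e t = v then w e else 0) =
      ∑ e : ∀ t, Fin (a t), if e t = u then w e else 0}
  zero_mem' := by intro t v u; simp
  add_mem' := by
    intro x y hx hy t v u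
    have key : ∀ v : Fin (a t),
        (∑ e : ∀ t, Fin (a t), if e t = v then (x + y) e else 0) =
          (∑ e : ∀ t, Fin (a t), if e t = v then x e else 0) +
            ∑ e : ∀ t, Fin (a t), if e t = v then y e else 0 := by
      intro v
      rw [← Finset.sum_add_distrib]
      apply Finset.sum_congr rfl
      intro e _
      by_cases h : e t = v <;> simp [h]
    rw [key v, key u, hx t v u, hy t v u]

open Finset

section
variable {d : ℕ} {a : Fin d → ℕ}

variable (a) in
def sideSum (t : Fin d) (v : Fin (a t)) : ((∀ t, Fin (a t)) → ℕ) →+ ℕ :=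
  ∑ e with e t = v, Pi.evalAddMonoidHom (fun _ ↦ ℕ) e

theorem sideSum_apply (t : Fin d) (v : Fin (a t)) (w : (∀ t, Fin (a t)) → ℕ) :
    sideSum a t v w = ∑ e, if e t = v then w e else 0 := by
  rw [sideSum, AddMonoidHom.finsetSum_apply, sum_filter]
  rfl

theorem mem_balancedSubmonoid_iff {w : (∀ t, Fin (a t)) → ℕ} :
    w ∈ balancedSubmonoid d a ↔ ∀ t v u, sideSum a t v w = sideSum a t u w := by
  simp only [sideSum_apply]
  rfl

theorem mem_balancedSubmonoid_of_add_mem {x y : (∀ t, Fin (a t)) → ℕ}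
    (hx : x ∈ balancedSubmonoid d a) (hxy : x + y ∈ balancedSubmonoid d a) :
    y ∈ balancedSubmonoid d a := by
  rw [mem_balancedSubmonoid_iff] at hx hxy ⊢
  intro t v u
  have h := hxy t v u
  rwa [map_add, map_add, hx t v u, add_right_inj] at h

end

theorem balancedSubmonoid_fg_general (d : ℕ) (a : Fin d → ℕ) : (balancedSubmonoid d a).FG :=
  AddSubmonoid.fg_of_subtractive fun _ hx _ hxy ↦ mem_balancedSubmonoid_of_add_mem hx hxy

/-- Gordan-type claim: the monoid of balanced `ℕ`-valued functions on
`Fin (a 0) × ⋯ × Fin (a (d-1))` (pointwise addition) is finitely generated. -/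
theorem balancedSubmonoid_fg (d : ℕ) (hd : 0 < d) (a : Fin d → ℕ)
    (ha : ∀ t, 0 < a t) : (balancedSubmonoid d a).FG :=
  balancedSubmonoid_fg_general d a
end

section
/- Let k and n be integers with 1 ≤ k < n. If n is even, there exists a (k, n, n)-fractionally balanced tripartite hypergraph whose matching number is at most min(k, ⌊3n/4⌋); if n is odd, there exists a (k, n, n)-fractionally balanced tripartite hypergraph whose matching number is at most min(k, ⌊(3n+1)/4⌋). -/
/-!
For `2p ≤ k`, group the first `2p` vertices of every side into `p` couples `{2j, 2j + 1}` and put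
on the `j`-th couples of the three sides the four edges of a `2 × 2` Latin square, so that every
couple vertex lies in two of them; the other `n - 2p` vertices of the two big sides span, with all
`k` colours, a complete bulk. Couple colours already get degree `k` from the couples, so they are
lighter in the bulk (weight `n - k` against `n`), and then all degrees on each side are equal.
A matching uses distinct colours, distinct last coordinates in the bulk and at most one edge of
each couple, as two edges of a `2 × 2` Latin square always meet; so it has at most
`min k (n - p)` edges. For a target `m`, taking `p = 0` if `k ≤ m` and `p = n - m` otherwise
bounds this by `min k m` as soon as `2n ≤ 3m + 1`, which holds for both targets of the theorem.
-/

open Finset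

section

variable {a b c : ℕ}

lemma sum_ite_fst_eq (f : Fin a × Fin b × Fin c → ℝ) (v : Fin a) :
    (∑ e : Fin a × Fin b × Fin c, if e.1 = v then f e else 0) = ∑ y, ∑ z, f (v, y, z) := by
  rw [Fintype.sum_prod_type, sum_eq_single v (fun x _ hx => by simp [hx]) (by simp)]
  simp [Fintype.sum_prod_type]

lemma sum_ite_snd_eq (f : Fin a × Fin b × Fin c → ℝ) (v : Fin b) :
    (∑ e : Fin a × Fin b × Fin c, if e.2.1 = v then f e else 0) = ∑ x, ∑ z, f (x, v, z) := by
  rw [Fintype.sum_prod_type]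
  refine sum_congr rfl fun x _ => ?_
  rw [Fintype.sum_prod_type, sum_eq_single v (fun y _ hy => by simp [hy]) (by simp)]
  simp

lemma sum_ite_thd_eq (f : Fin a × Fin b × Fin c → ℝ) (v : Fin c) :
    (∑ e : Fin a × Fin b × Fin c, if e.2.2 = v then f e else 0) = ∑ x, ∑ y, f (x, y, v) := by
  simp [Fintype.sum_prod_type]

lemma triBalanced_of_sum_eq {H : Finset (Fin a × Fin b × Fin c)} {f : Fin a × Fin b × Fin c → ℝ}
    (hf : ∀ e, 0 ≤ f e) (hH : ∀ e, e ∉ H → f e = 0) {d₁ d₂ d₃ : ℝ}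
    (h₁ : ∀ v, ∑ y, ∑ z, f (v, y, z) = d₁) (h₂ : ∀ v, ∑ x, ∑ z, f (x, v, z) = d₂)
    (h₃ : ∀ v, ∑ x, ∑ y, f (x, y, v) = d₃) : TriBalanced H f :=
  ⟨hf, hH, fun v w => by simp only [sum_ite_fst_eq, h₁],
    fun v w => by simp only [sum_ite_snd_eq, h₂], fun v w => by simp only [sum_ite_thd_eq, h₃]⟩

lemma TriMatching.card_le_left {H M : Finset (Fin a × Fin b × Fin c)} (hM : TriMatching H M) :
    #M ≤ a := by
  simpa using card_le_card_of_injOn Prod.fst (fun e _ => mem_univ e.1)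
    fun e he e' he' h => by_contra fun hne => (hM.2 e he e' he' hne).1 h

end

lemma sum_ite_val_lt {n m : ℕ} (hm : m ≤ n) (a b : ℝ) :
    (∑ y : Fin n, if (y : ℕ) < m then a else b) = m * a + (n - m) * b := by
  rw [sum_ite, sum_const, sum_const, Fin.card_filter_val_lt, min_eq_right hm]
  have hcompl : #{y : Fin n | ¬(y : ℕ) < m} = n - m := by
    rw [filter_not, card_sdiff_of_subset (filter_subset _ _), card_univ, Fintype.card_fin,
      Fin.card_filter_val_lt, min_eq_right hm]
  rw [hcompl, nsmul_eq_mul, nsmul_eq_mul, Nat.cast_sub hm]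

/-- The edges of `p` disjoint copies of the `2 × 2` Latin square, the `j`-th one on the vertices
`{2j, 2j + 1}` of each side. -/
def IsCoupleEdge (p x y z : ℕ) : Prop :=
  x / 2 < p ∧ y / 2 = x / 2 ∧ z / 2 = x / 2 ∧ (x + y + z) % 2 = 0

instance (p x y z : ℕ) : Decidable (IsCoupleEdge p x y z) :=
  inferInstanceAs (Decidable (_ ∧ _ ∧ _ ∧ _))

section
variable {p x y z : ℕ}

lemma isCoupleEdge_comm : IsCoupleEdge p x y z ↔ IsCoupleEdge p y x z := by
  unfold IsCoupleEdge; omega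

lemma isCoupleEdge_rotate : IsCoupleEdge p x y z ↔ IsCoupleEdge p z x y := by
  unfold IsCoupleEdge; omega

namespace IsCoupleEdge

lemma thd_lt (h : IsCoupleEdge p x y z) : z < 2 * p := by
  unfold IsCoupleEdge at *; omega

lemma eq_or_eq_or_eq {x' y' z' : ℕ} (h : IsCoupleEdge p x y z) (h' : IsCoupleEdge p x' y' z')
    (hz : z / 2 = z' / 2) : x = x' ∨ y = y' ∨ z = z' := by
  unfold IsCoupleEdge at *; omega

end IsCoupleEdge

end

lemma sum_sum_ite_isCoupleEdge {m m' p : ℕ} (hm : 2 * p ≤ m) (hm' : 2 * p ≤ m') (x : ℕ) :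
    (∑ y : Fin m, ∑ z : Fin m', if IsCoupleEdge p x y z then (1 : ℝ) else 0) =
      if x < 2 * p then 2 else 0 := by
  have inner : ∀ y : ℕ, (∑ z : Fin m', if IsCoupleEdge p x y z then (1 : ℝ) else 0) =
      if x / 2 < p ∧ y / 2 = x / 2 then 1 else 0 := by
    intro y
    by_cases hxy : x / 2 < p ∧ y / 2 = x / 2
    · have hz : ∀ z : Fin m', IsCoupleEdge p x y z ↔ (z : ℕ) = 2 * (x / 2) + (x + y) % 2 := by
        intro z; unfold IsCoupleEdge; omega
      simp only [hz, if_pos hxy]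
      rw [Fin.sum_univ_eq_sum_range (fun z => if z = 2 * (x / 2) + (x + y) % 2 then (1 : ℝ) else 0),
        sum_ite_eq', if_pos (mem_range.2 (by omega))]
    · simp only [if_neg hxy]
      exact sum_eq_zero fun z _ => if_neg fun h => hxy ⟨h.1, h.2.1⟩
  simp only [inner]
  rw [Fin.sum_univ_eq_sum_range (fun y => if x / 2 < p ∧ y / 2 = x / 2 then (1 : ℝ) else 0),
    sum_boole]
  split_ifs with hx
  · have hcouple : {y ∈ range m | x / 2 < p ∧ y / 2 = x / 2} = {2 * (x / 2), 2 * (x / 2) + 1} := by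
      ext y; simp only [mem_filter, mem_range, mem_insert, mem_singleton]; omega
    rw [hcouple, card_pair (by omega)]; norm_num
  · have hempty : {y ∈ range m | x / 2 < p ∧ y / 2 = x / 2} = ∅ := by
      ext y; simp only [mem_filter, mem_range, notMem_empty, iff_false]; omega
    simp [hempty]

noncomputable def bulkCouplesWeight (k n p : ℕ) (i : Fin k) (b c : Fin n) : ℝ :=
  (if (i : ℕ) < 2 * p then (n - k : ℝ) else n) *
      (if (b : ℕ) < 2 * p then 0 else 1) * (if (c : ℕ) < 2 * p then 0 else 1) +
    ((n : ℝ) - 2 * p) ^ 2 * k / 2 * if IsCoupleEdge p i b c then 1 else 0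

def bulkCouplesHypergraph (k n p : ℕ) : Finset (Fin k × Fin n × Fin n) :=
  {e | (2 * p ≤ (e.2.1 : ℕ) ∧ 2 * p ≤ (e.2.2 : ℕ)) ∨ IsCoupleEdge p e.1 e.2.1 e.2.2}

section
variable {k n p : ℕ}

lemma sum_sum_bulkCouplesWeight_fst (hpk : 2 * p ≤ k) (hkn : k ≤ n) (v : Fin k) :
    ∑ y, ∑ z, bulkCouplesWeight k n p v y z = ((n : ℝ) - 2 * p) ^ 2 * n := by
  simp only [bulkCouplesWeight, sum_add_distrib, ← mul_sum, ← sum_mul]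
  rw [sum_sum_ite_isCoupleEdge (by omega) (by omega), sum_ite_val_lt (by omega)]
  push_cast
  split_ifs <;> ring

lemma sum_sum_bulkCouplesWeight_snd (hpk : 2 * p ≤ k) (hkn : k ≤ n) (v : Fin n) :
    ∑ x, ∑ z, bulkCouplesWeight k n p x v z = ((n : ℝ) - 2 * p) ^ 2 * k := by
  simp only [bulkCouplesWeight, sum_add_distrib, ← mul_sum, ← sum_mul]
  simp only [isCoupleEdge_comm (y := (v : ℕ))]
  rw [sum_sum_ite_isCoupleEdge (by omega) (by omega), sum_ite_val_lt (by omega),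
    sum_ite_val_lt (by omega)]
  push_cast
  split_ifs <;> ring

lemma sum_sum_bulkCouplesWeight_thd (hpk : 2 * p ≤ k) (hkn : k ≤ n) (v : Fin n) :
    ∑ x, ∑ y, bulkCouplesWeight k n p x y v = ((n : ℝ) - 2 * p) ^ 2 * k := by
  simp only [bulkCouplesWeight, sum_add_distrib, ← mul_sum, ← sum_mul]
  simp only [isCoupleEdge_rotate (z := (v : ℕ))]
  rw [sum_sum_ite_isCoupleEdge (by omega) (by omega), sum_ite_val_lt (by omega),
    sum_ite_val_lt (by omega)]
  push_cast
  split_ifs <;> ring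

lemma bulkCouplesWeight_nonneg (hkn : k ≤ n) (i : Fin k) (b c : Fin n) :
    0 ≤ bulkCouplesWeight k n p i b c := by
  have : (k : ℝ) ≤ n := by exact_mod_cast hkn
  unfold bulkCouplesWeight
  split_ifs <;> nlinarith [sq_nonneg ((n : ℝ) - 2 * p)]

lemma bulkCouplesWeight_eq_zero {i : Fin k} {b c : Fin n}
    (h : (i, b, c) ∉ bulkCouplesHypergraph k n p) : bulkCouplesWeight k n p i b c = 0 := by
  simp only [bulkCouplesHypergraph, mem_filter, mem_univ, true_and, not_or, not_and, not_le] at h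
  unfold bulkCouplesWeight
  by_cases hb : (b : ℕ) < 2 * p
  · simp [hb, h.2]
  · simp [h.2, h.1 (not_lt.1 hb)]

lemma triFracBalanced_bulkCouplesHypergraph (hk : 1 ≤ k) (hkn : k < n) (hpk : 2 * p ≤ k) :
    TriFracBalanced (bulkCouplesHypergraph k n p) := by
  refine ⟨fun e => bulkCouplesWeight k n p e.1 e.2.1 e.2.2,
    triBalanced_of_sum_eq (fun e => bulkCouplesWeight_nonneg hkn.le _ _ _)
      (fun e he => bulkCouplesWeight_eq_zero he) (sum_sum_bulkCouplesWeight_fst hpk hkn.le)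
      (sum_sum_bulkCouplesWeight_snd hpk hkn.le) (sum_sum_bulkCouplesWeight_thd hpk hkn.le),
    fun h => ?_⟩
  have hk' : (k : ℝ) < n := by exact_mod_cast hkn
  have hnc : ¬IsCoupleEdge p 0 (2 * p) (2 * p) := by unfold IsCoupleEdge; omega
  have hpos : 0 < bulkCouplesWeight k n p ⟨0, hk⟩ ⟨2 * p, by omega⟩ ⟨2 * p, by omega⟩ := by
    simp only [bulkCouplesWeight, lt_self_iff_false, if_false, hnc, mul_one, mul_zero, add_zero]
    split_ifs <;> linarith
  exact hpos.ne' (congrFun h (⟨0, hk⟩, ⟨2 * p, by omega⟩, ⟨2 * p, by omega⟩))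

lemma card_le_of_triMatching_bulkCouplesHypergraph (hpn : 2 * p ≤ n)
    {M : Finset (Fin k × Fin n × Fin n)} (hM : TriMatching (bulkCouplesHypergraph k n p) M) :
    #M ≤ n - p := by
  have hH : ∀ e ∈ M, (2 * p ≤ (e.2.1 : ℕ) ∧ 2 * p ≤ (e.2.2 : ℕ)) ∨ IsCoupleEdge p e.1 e.2.1 e.2.2 :=
    fun e he => by simpa [bulkCouplesHypergraph] using hM.1 he
  -- a couple edge occupies the slot of its couple, a bulk edge the slot of its last vertex
  let slot : Fin k × Fin n × Fin n → ℕ := fun e =>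
    if (e.2.2 : ℕ) < 2 * p then (e.2.2 : ℕ) / 2 else e.2.2 - p
  have hslot : ∀ e ∈ M, slot e ∈ range (n - p) := fun e he => by
    have := e.2.2.isLt
    rcases hH e he with hb | hc
    · simp only [slot, mem_range]; split_ifs <;> omega
    · simp only [slot, mem_range, if_pos hc.thd_lt]; have := hc.thd_lt; omega
  have hinj : Set.InjOn slot M := fun e he e' he' h => by_contra fun hne => by
    obtain ⟨h₁, h₂, h₃⟩ := hM.2 e he e' he' hne
    rcases hH e he with ⟨-, hb⟩ | hc <;> rcases hH e' he' with ⟨-, hb'⟩ | hc'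
    · simp only [slot, if_neg (not_lt.2 hb), if_neg (not_lt.2 hb')] at h
      exact h₃ (Fin.ext (by omega))
    · simp only [slot, if_neg (not_lt.2 hb), if_pos hc'.thd_lt] at h
      have := hc'.thd_lt; omega
    · simp only [slot, if_pos hc.thd_lt, if_neg (not_lt.2 hb')] at h
      have := hc.thd_lt; omega
    · simp only [slot, if_pos hc.thd_lt, if_pos hc'.thd_lt] at h
      rcases hc.eq_or_eq_or_eq hc' h with h | h | h
      exacts [h₁ (Fin.ext h), h₂ (Fin.ext h), h₃ (Fin.ext h)]
  simpa using card_le_card_of_injOn slot hslot hinj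

end

lemma exists_triFracBalanced_card_le_min {k n m : ℕ} (hk : 1 ≤ k) (hkn : k < n)
    (hm : 2 * n ≤ 3 * m + 1) :
    ∃ H : Finset (Fin k × Fin n × Fin n), TriFracBalanced H ∧
      ∀ M, TriMatching H M → #M ≤ min k m := by
  obtain ⟨p, hpk, hp⟩ : ∃ p, 2 * p ≤ k ∧ min k (n - p) ≤ m := by
    by_cases hkm : k ≤ m
    · exact ⟨0, by omega, by omega⟩
    · exact ⟨n - m, by omega, by omega⟩
  refine ⟨bulkCouplesHypergraph k n p, triFracBalanced_bulkCouplesHypergraph hk hkn hpk,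
    fun M hM => le_min hM.card_le_left ((le_min hM.card_le_left ?_).trans hp)⟩
  exact card_le_of_triMatching_bulkCouplesHypergraph (by omega) hM

/-- For `1 ≤ k < n`: if `n` is even there is a `(k,n,n)`-fractionally balanced
tripartite hypergraph with matching number at most `min k ⌊3n/4⌋`, and if `n` is
odd there is one with matching number at most `min k ⌊(3n+1)/4⌋`. -/
theorem bm_upper_k_n_n (k n : ℕ) (hk : 1 ≤ k) (hkn : k < n) :
    (Even n → ∃ H : Finset (Fin k × Fin n × Fin n), TriFracBalanced H ∧
      ∀ M, TriMatching H M → M.card ≤ min k (3 * n / 4)) ∧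
    (Odd n → ∃ H : Finset (Fin k × Fin n × Fin n), TriFracBalanced H ∧
      ∀ M, TriMatching H M → M.card ≤ min k ((3 * n + 1) / 4)) :=
  ⟨fun _ => exists_triFracBalanced_card_le_min hk hkn (by omega),
    fun _ => exists_triFracBalanced_card_le_min hk hkn (by omega)⟩
end

section
/- Let n ≥ 2 be an integer, let m = ⌊n/2⌋, and let k be an integer with m < k ≤ n such that k − m divides m. Then there exists a (k, n, n)-fractionally balanced tripartite hypergraph whose matching number is at most ⌈n/2⌉. -/
/-!
Put `u = k - ⌊n/2⌋` and `d = ⌊n/2⌋ / u`, so that `k = u (d + 1)` and `n = 2ud + ε` with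
`ε = n mod 2`. Split the first side into `u` blocks of `d` private vertices and one hub, and the
other two sides into `ud` pairs, grouped into `u` blocks of `d` pairs, plus `ε` leftover
vertices. Each private vertex spans the two diagonal edges `(x, y, y)` over its pair, each hub
spans the two antidiagonal edges `(x, y, y')`, `y ≠ y'`, over every pair of its block, and
every hub `x` spans the edge `(x, y₀, y₀)` for each leftover vertex `y₀`. With weights `n`, `2u - ε`
and `2 (d + 1)` on these three kinds of edges, every vertex of the first side has degree `2n`
and every other vertex degree `2k`. Two edges over the same pair (or the same leftover vertex)
always meet, so a matching has at most `ud + ε = ⌈n/2⌉` edges.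
-/

section Matching

variable {a b c : ℕ} {H M : Finset (Fin a × Fin b × Fin c)}

theorem TriMatching.card_le_of_classes_intersect {β : Type*} [Fintype β]
    (hM : TriMatching H M) (g : Fin a × Fin b × Fin c → β)
    (hg : ∀ e ∈ H, ∀ e' ∈ H, g e = g e' → e ≠ e' →
      e.1 = e'.1 ∨ e.2.1 = e'.2.1 ∨ e.2.2 = e'.2.2) :
    M.card ≤ Fintype.card β := by
  rw [← Finset.card_univ]
  refine Finset.card_le_card_of_injOn g (fun _ _ => Finset.mem_coe.2 (Finset.mem_univ _)) ?_
  intro e he e' he' hee'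
  by_contra hne
  obtain ⟨h1, h2, h3⟩ := hM.2 e he e' he' hne
  rcases hg e (hM.1 he) e' (hM.1 he') hee' hne with h | h | h <;> contradiction

end Matching

section Pushforward

variable {ι : Type*} [Fintype ι] {a b c : ℕ}

def pushforwardWeight (φ : ι → Fin a × Fin b × Fin c) (w : ι → ℝ) :
    Fin a × Fin b × Fin c → ℝ :=
  fun e => ∑ p, if φ p = e then w p else 0

theorem sum_ite_pushforwardWeight (φ : ι → Fin a × Fin b × Fin c) (w : ι → ℝ)
    (P : Fin a × Fin b × Fin c → Prop) [DecidablePred P] :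
    ∑ e, (if P e then pushforwardWeight φ w e else 0) = ∑ p, if P (φ p) then w p else 0 := by
  calc _ = ∑ e, ∑ p, if φ p = e then (if P (φ p) then w p else 0) else 0 := by
        refine Finset.sum_congr rfl fun e _ => ?_
        split_ifs <;> simp_all [pushforwardWeight]
    _ = _ := by rw [Finset.sum_comm]; simp

theorem triBalanced_pushforwardWeight (φ : ι → Fin a × Fin b × Fin c) (w : ι → ℝ)
    (hw : ∀ p, 0 ≤ w p) {Dx Dy Dz : ℝ}
    (hx : ∀ v, ∑ p, (if (φ p).1 = v then w p else 0) = Dx)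
    (hy : ∀ v, ∑ p, (if (φ p).2.1 = v then w p else 0) = Dy)
    (hz : ∀ v, ∑ p, (if (φ p).2.2 = v then w p else 0) = Dz) :
    TriBalanced (Finset.univ.image φ) (pushforwardWeight φ w) := by
  refine ⟨fun e => Finset.sum_nonneg fun p _ => ?_, fun e he => ?_, ?_, ?_, ?_⟩
  · split_ifs <;> simp [hw]
  · refine Finset.sum_eq_zero fun p _ => if_neg fun hp => he ?_
    exact Finset.mem_image.2 ⟨p, Finset.mem_univ p, hp⟩
  all_goals intro v v'; simp only [sum_ite_pushforwardWeight, hx, hy, hz]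

end Pushforward

namespace HubHypergraph

variable (u d ε : ℕ)

/-- Diagonal edges, antidiagonal edges and leftover edges. -/
abbrev Index : Type :=
  ((Fin u × Fin d) × Fin 2) ⊕ ((Fin u × Fin d) × Fin 2) ⊕ (Fin u × Fin ε)

def xVertex : Fin u × Fin (d + 1) ≃ Fin (u * (d + 1)) := finProdFinEquiv

def yVertex : ((Fin u × Fin d) × Fin 2) ⊕ Fin ε ≃ Fin (u * d * 2 + ε) :=
  ((Equiv.prodCongr finProdFinEquiv (Equiv.refl _)).trans finProdFinEquiv).sumCongr
    (Equiv.refl _) |>.trans finSumFinEquiv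

def edge : Index u d ε → Fin (u * (d + 1)) × Fin (u * d * 2 + ε) × Fin (u * d * 2 + ε)
  | .inl ((c, i), t) =>
      (xVertex u d (c, i.castSucc), yVertex u d ε (.inl ((c, i), t)),
        yVertex u d ε (.inl ((c, i), t)))
  | .inr (.inl ((c, i), t)) =>
      (xVertex u d (c, Fin.last d), yVertex u d ε (.inl ((c, i), t)),
        yVertex u d ε (.inl ((c, i), t.rev)))
  | .inr (.inr (c, j)) =>
      (xVertex u d (c, Fin.last d), yVertex u d ε (.inr j), yVertex u d ε (.inr j))

def weight : Index u d ε → ℝ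
  | .inl _ => u * d * 2 + ε
  | .inr (.inl _) => 2 * u - ε
  | .inr (.inr _) => 2 * (d + 1)

variable {u d ε}

theorem sum_weight_xVertex (v : Fin (u * (d + 1))) :
    ∑ p, (if (edge u d ε p).1 = v then weight u d ε p else 0) = 2 * (u * d * 2 + ε) := by
  obtain ⟨⟨c, r⟩, rfl⟩ := (xVertex u d).surjective v
  simp only [Fintype.sum_sum_type, Fintype.sum_prod_type, edge, weight]
  cases r using Fin.lastCases with
  | last => simp; ring
  | cast i => simp [ite_and, (Fin.castSucc_ne_last i).symm]; ring

theorem sum_weight_yVertex (v : Fin (u * d * 2 + ε)) :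
    ∑ p, (if (edge u d ε p).2.1 = v then weight u d ε p else 0) = 2 * (u * (d + 1)) := by
  obtain ⟨⟨⟨c, i⟩, t⟩ | j, rfl⟩ := (yVertex u d ε).surjective v <;>
    simp only [Fintype.sum_sum_type, Fintype.sum_prod_type, edge, weight] <;>
    simp [ite_and] <;> ring

theorem sum_weight_zVertex (v : Fin (u * d * 2 + ε)) :
    ∑ p, (if (edge u d ε p).2.2 = v then weight u d ε p else 0) = 2 * (u * (d + 1)) := by
  obtain ⟨⟨⟨c, i⟩, t⟩ | j, rfl⟩ := (yVertex u d ε).surjective v <;>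
    simp only [Fintype.sum_sum_type, Fintype.sum_prod_type, edge, weight] <;>
    simp [ite_and, Fin.rev_eq_iff] <;> ring

def pairClass (y : Fin (u * d * 2 + ε)) : (Fin u × Fin d) ⊕ Fin ε :=
  ((yVertex u d ε).symm y).map Prod.fst id

theorem edges_intersect_of_pairClass_eq (p q : Index u d ε)
    (h : pairClass (edge u d ε p).2.1 = pairClass (edge u d ε q).2.1) :
    (edge u d ε p).1 = (edge u d ε q).1 ∨ (edge u d ε p).2.1 = (edge u d ε q).2.1 ∨
      (edge u d ε p).2.2 = (edge u d ε q).2.2 := by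
  have fin_two : ∀ t t' : Fin 2, t = t' ∨ t = t'.rev := by decide
  rcases p with ⟨⟨c, i⟩, t⟩ | ⟨⟨c, i⟩, t⟩ | ⟨c, j⟩ <;>
    rcases q with ⟨⟨c', i'⟩, t'⟩ | ⟨⟨c', i'⟩, t'⟩ | ⟨c', j'⟩ <;>
    simp [edge, pairClass] at h ⊢
  all_goals first
    | tauto
    | obtain ⟨rfl, rfl⟩ := h
      simpa [Fin.rev_eq_iff, Ne.symm (Fin.castSucc_ne_last _)] using fin_two t t'

theorem weight_nonneg (hε : ε ≤ 2 * u) (p : Index u d ε) : 0 ≤ weight u d ε p := by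
  have : (ε : ℝ) ≤ 2 * u := by exact_mod_cast hε
  rcases p with _ | _ | _ <;> simp only [weight]
  · positivity
  · linarith
  · positivity

theorem exists_triFracBalanced_card_le (hu : 0 < u) (hd : 0 < d) (hε : ε ≤ 2 * u) :
    ∃ H : Finset (Fin (u * (d + 1)) × Fin (u * d * 2 + ε) × Fin (u * d * 2 + ε)),
      TriFracBalanced H ∧ ∀ M, TriMatching H M → M.card ≤ u * d + ε := by
  refine ⟨Finset.univ.image (edge u d ε), ⟨pushforwardWeight (edge u d ε) (weight u d ε),
    triBalanced_pushforwardWeight _ _ (weight_nonneg hε) sum_weight_xVertex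
      sum_weight_yVertex sum_weight_zVertex, fun h0 => ?_⟩, fun M hM => ?_⟩
  · have hdeg := sum_ite_pushforwardWeight (edge u d ε) (weight u d ε)
      (·.1 = xVertex u d (⟨0, hu⟩, 0))
    rw [sum_weight_xVertex, h0] at hdeg
    simp only [Pi.zero_apply, ite_self, Finset.sum_const_zero] at hdeg
    have hud : (0 : ℝ) < u * d := by exact_mod_cast Nat.mul_pos hu hd
    linarith [Nat.cast_nonneg (α := ℝ) ε]
  · have := hM.card_le_of_classes_intersect (fun e => pairClass e.2.1) (by
      simp only [Finset.mem_image, Finset.mem_univ, true_and]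
      rintro _ ⟨p, rfl⟩ _ ⟨q, rfl⟩ h -
      exact edges_intersect_of_pairClass_eq p q h)
    simpa using this

end HubHypergraph

theorem bm_upper_k_n_n_div_general (n k : ℕ) (hn : 2 ≤ n)
    (hmk : n / 2 < k) (hdvd : (k - n / 2) ∣ (n / 2)) :
    ∃ H : Finset (Fin k × Fin n × Fin n), TriFracBalanced H ∧
      ∀ M, TriMatching H M → M.card ≤ (n + 1) / 2 := by
  obtain ⟨u, d, ε, hu, hd, hε, rfl, rfl⟩ : ∃ u d ε, 0 < u ∧ 0 < d ∧ ε ≤ 1 ∧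
      k = u * (d + 1) ∧ n = u * d * 2 + ε := by
    obtain ⟨d, hd⟩ := hdvd
    refine ⟨k - n / 2, d, n % 2, by omega, Nat.pos_of_ne_zero ?_, by omega, ?_, by omega⟩
    · rintro rfl
      omega
    · rw [Nat.mul_succ, ← hd]
      omega
  obtain ⟨H, hH, hν⟩ :=
    HubHypergraph.exists_triFracBalanced_card_le hu hd (by omega : ε ≤ 2 * u)
  exact ⟨H, hH, fun M hM => (hν M hM).trans (by omega)⟩

/-- For `n ≥ 2` and `⌊n/2⌋ < k ≤ n` with `k - ⌊n/2⌋` dividing `⌊n/2⌋`, there is a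
`(k,n,n)`-fractionally balanced tripartite hypergraph with matching number at
most `⌈n/2⌉`. -/
theorem bm_upper_k_n_n_div (n k : ℕ) (hn : 2 ≤ n)
    (hmk : n / 2 < k) (hkn : k ≤ n) (hdvd : (k - n / 2) ∣ (n / 2)) :
    ∃ H : Finset (Fin k × Fin n × Fin n), TriFracBalanced H ∧
      ∀ M, TriMatching H M → M.card ≤ (n + 1) / 2 :=
  bm_upper_k_n_n_div_general n k hn hmk hdvd
end

section
/- Let q ≥ 3 be an integer and suppose there exists a finite projective plane in which every line contains exactly q points. Then there exists a q-partite hypergraph with all q sides of size q that is (q,…,q)-fractionally balanced and whose matching number equals 2. -/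
open Finset Configuration
open Configuration.HasPoints (mkPoint mkPoint_ax)
open Configuration.HasLines (mkLine mkLine_ax)

namespace BMAux

def lastv (n : ℕ) (hn : 3 ≤ n) : Fin n := ⟨n - 1, Nat.sub_lt (Nat.lt_of_lt_of_le (by decide) hn) Nat.one_pos⟩

variable {P L : Type} [Membership P L] [Configuration.ProjectivePlane P L]

lemma inter_unique {x y : P} {l m : L} (hlm : l ≠ m) (h1 : x ∈ l) (h2 : x ∈ m)
    (h3 : y ∈ l) (h4 : y ∈ m) : x = y :=
  (Configuration.Nondegenerate.eq_or_eq h1 h3 h2 h4).resolve_right hlm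

lemma line_unique {x p : P} {l m : L} (hxp : x ≠ p) (h1 : x ∈ l) (h2 : p ∈ l)
    (h3 : x ∈ m) (h4 : p ∈ m) : l = m :=
  (Configuration.Nondegenerate.eq_or_eq h1 h2 h3 h4).resolve_left hxp

structure Setup (q : ℕ) (P L : Type) [Membership P L]
    [Configuration.ProjectivePlane P L] (p : P) where
  sig : {l : L // p ∈ l} ≃ Fin q
  tau : ∀ t : Fin q, {x : P // x ∈ (sig.symm t).1 ∧ x ≠ p} ≃ Fin (q - 1)

variable {q : ℕ} {p : P} (S : Setup q P L p) (hq : 3 ≤ q)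

def Setup.line (t : Fin q) : L := (S.sig.symm t).1

lemma Setup.p_mem_line (t : Fin q) : p ∈ S.line t := (S.sig.symm t).2

def Setup.val (t : Fin q) (x : {x : P // x ∈ S.line t ∧ x ≠ p}) : Fin q :=
  Fin.castLE (Nat.sub_le q 1) (S.tau t x)

lemma Setup.val_ne_last (t : Fin q) (x : {x : P // x ∈ S.line t ∧ x ≠ p}) : S.val t x ≠ lastv q hq := by
  intro h
  have h1 := (S.tau t x).isLt
  have h2 := congrArg Fin.val h
  simp only [Setup.val, Fin.coe_castLE, lastv] at h2
  omega

lemma Setup.val_inj {t : Fin q} {x y} (h : S.val t x = S.val t y) : x = y :=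
  (S.tau t).injective (Fin.castLE_injective _ h)

lemma Setup.line_ne {m : L} (hm : p ∉ m) (t : Fin q) : S.line t ≠ m :=
  fun h => hm (h ▸ S.p_mem_line t)

noncomputable def Setup.pt (m : L) (hm : p ∉ m) (t : Fin q) : P :=
  mkPoint (S.line_ne hm t)

lemma Setup.pt_mem_line (m : L) (hm : p ∉ m) (t : Fin q) : S.pt m hm t ∈ S.line t :=
  (mkPoint_ax (S.line_ne hm t)).1

lemma Setup.pt_mem (m : L) (hm : p ∉ m) (t : Fin q) : S.pt m hm t ∈ m :=
  (mkPoint_ax (S.line_ne hm t)).2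

lemma Setup.pt_ne (m : L) (hm : p ∉ m) (t : Fin q) : S.pt m hm t ≠ p :=
  fun h => hm (h ▸ S.pt_mem m hm t)

lemma Setup.pt_eq {m : L} (hm : p ∉ m) {t : Fin q} {x : P}
    (h1 : x ∈ S.line t) (h2 : x ∈ m) : S.pt m hm t = x :=
  inter_unique (S.line_ne hm t) (S.pt_mem_line m hm t) (S.pt_mem m hm t) h1 h2

noncomputable def Setup.E (hq : 3 ≤ q) (m : L) (t : Fin q) : Fin q :=
  @dite _ (p ∉ m) (Classical.propDecidable _)
    (fun h => S.val t ⟨S.pt m h t, S.pt_mem_line m h t, S.pt_ne m h t⟩) (fun _ => lastv q hq)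

lemma Setup.E_eq {m : L} (hm : p ∉ m) (t : Fin q) :
    S.E hq m t = S.val t ⟨S.pt m hm t, S.pt_mem_line m hm t, S.pt_ne m hm t⟩ := by unfold Setup.E; rw [dif_pos hm]

lemma Setup.E_ne_last {m : L} (hm : p ∉ m) (t : Fin q) : S.E hq m t ≠ lastv q hq := by
  rw [S.E_eq hq hm]; exact S.val_ne_last hq t _

lemma Setup.E_eq_val_iff {m : L} (hm : p ∉ m) {t : Fin q}
    (x : {x : P // x ∈ S.line t ∧ x ≠ p}) :
    S.E hq m t = S.val t x ↔ x.1 ∈ m := by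
  constructor
  · intro h
    rw [S.E_eq hq hm] at h
    have h2 : S.pt m hm t = x.1 := congrArg Subtype.val (S.val_inj h)
    exact h2 ▸ S.pt_mem m hm t
  · intro h
    rw [S.E_eq hq hm]
    exact congrArg (S.val t) (Subtype.ext (S.pt_eq hm x.2.1 h))

lemma Setup.exists_eq {m m' : L} (hm : p ∉ m) (hm' : p ∉ m') (hne : m ≠ m') :
    ∃ t, S.E hq m t = S.E hq m' t := by
  have hx1 : mkPoint hne ∈ m := (mkPoint_ax hne).1
  have hx2 : mkPoint hne ∈ m' := (mkPoint_ax hne).2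
  have hxp : mkPoint hne ≠ p := fun h => hm (h ▸ hx1)
  have hpl := mkLine_ax (L := L) hxp
  refine ⟨S.sig ⟨mkLine hxp, hpl.2⟩, ?_⟩
  have hline : S.line (S.sig ⟨mkLine hxp, hpl.2⟩) = mkLine hxp := by
    simp [Setup.line]
  have hxl : mkPoint hne ∈ S.line (S.sig ⟨mkLine hxp, hpl.2⟩) := by rw [hline]; exact hpl.1
  rw [S.E_eq hq hm, S.E_eq hq hm']
  exact congrArg (S.val _) (Subtype.ext ((S.pt_eq hm hxl hx1).trans (S.pt_eq hm' hxl hx2).symm))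



lemma countA {d : ℕ} {a : Fin d → ℕ} {ι : Type} [Fintype ι]
    (pr : ι → Prop) [DecidablePred pr] (g : ι → (∀ t, Fin (a t))) (t : Fin d) (v : Fin (a t)) :
    (∑ e : ∀ t, Fin (a t), if e t = v then (univ.filter fun i => pr i ∧ g i = e).card else 0)
      = (univ.filter fun i : ι => pr i ∧ g i t = v).card := by
  simp only [Finset.card_filter]
  have h1 : ∀ e : ∀ t, Fin (a t),
      (if e t = v then (∑ i : ι, if pr i ∧ g i = e then 1 else 0) else 0)
        = ∑ i : ι, if g i = e then (if pr i ∧ e t = v then 1 else 0) else 0 := by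
    intro e
    rw [show (if e t = v then (∑ i : ι, if pr i ∧ g i = e then 1 else 0) else 0)
        = ∑ i : ι, (if e t = v then (if pr i ∧ g i = e then 1 else 0) else 0) by
      split <;> simp]
    refine Finset.sum_congr rfl fun i _ => ?_
    split_ifs <;> simp_all
  rw [Finset.sum_congr rfl fun e _ => h1 e, Finset.sum_comm]
  refine Finset.sum_congr rfl fun i _ => ?_
  rw [Finset.sum_ite_eq univ (g i) (fun e => if pr i ∧ e t = v then 1 else 0)]
  simp

lemma countB {d : ℕ} {a : Fin d → ℕ} (c : ℝ) (e₀ : ∀ t, Fin (a t)) (t : Fin d) (v : Fin (a t)) :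
    (∑ e : ∀ t, Fin (a t), if e t = v then (if e = e₀ then c else 0) else 0)
      = if e₀ t = v then c else 0 := by
  have h1 : ∀ e : ∀ t, Fin (a t),
      (if e t = v then (if e = e₀ then c else 0) else 0)
        = if e = e₀ then (if e₀ t = v then c else 0) else 0 := by
    intro e
    rcases eq_or_ne e e₀ with rfl | hne
    · simp
    · simp [hne]
  rw [Finset.sum_congr rfl fun e _ => h1 e,
    Finset.sum_ite_eq' univ e₀ (fun _ => if e₀ t = v then c else 0)]
  simp

lemma degree_count {d : ℕ} {a : Fin d → ℕ} {ι : Type} [Fintype ι]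
    (pr : ι → Prop) [DecidablePred pr] (g : ι → (∀ t, Fin (a t))) (c : ℝ) (e₀ : ∀ t, Fin (a t))
    (t : Fin d) (v : Fin (a t)) :
    degree (fun e => ((univ.filter fun i => pr i ∧ g i = e).card : ℝ) +
        if e = e₀ then c else 0) t v
      = ((univ.filter fun i => pr i ∧ g i t = v).card : ℝ) + if e₀ t = v then c else 0 := by
  unfold degree
  have split : ∀ e : ∀ t, Fin (a t),
      (if e t = v then (((univ.filter fun i => pr i ∧ g i = e).card : ℝ) +
          if e = e₀ then c else 0) else 0)
      = (if e t = v then ((univ.filter fun i => pr i ∧ g i = e).card : ℝ) else 0)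
        + (if e t = v then (if e = e₀ then c else 0) else 0) := by
    intro e; split <;> simp
  rw [Finset.sum_congr rfl fun e _ => split e, Finset.sum_add_distrib]
  congr 1
  · rw [show (∑ e : ∀ t, Fin (a t),
        if e t = v then ((univ.filter fun i => pr i ∧ g i = e).card : ℝ) else 0)
      = ((∑ e : ∀ t, Fin (a t),
        if e t = v then (univ.filter fun i => pr i ∧ g i = e).card else 0 : ℕ) : ℝ) by
      push_cast [apply_ite (Nat.cast : ℕ → ℝ)]; rfl]
    rw [countA pr g t v]
  · exact countB c e₀ t v

end BMAux

/-- If a finite projective plane with exactly `q ≥ 3` points on every line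
exists, then there is a `q`-partite hypergraph with all `q` sides of size `q`
that is `(q,…,q)`-fractionally balanced and has matching number `2`. -/
theorem bm_projective_plane (q : ℕ) (hq : 3 ≤ q)
    (P L : Type) [Membership P L] [Fintype P] [Fintype L]
    [Configuration.ProjectivePlane P L]
    (hlines : ∀ l : L, Configuration.pointCount P l = q) :
    ∃ H : Finset (∀ _ : Fin q, Fin q),
      FracBalanced (a := fun _ => q) H ∧
      (∃ M, IsMatching (a := fun _ => q) H M ∧ M.card = 2) ∧
      ∀ M, IsMatching (a := fun _ => q) H M → M.card ≤ 2 := by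
  classical
  obtain ⟨p, p₂, p₃, l₁, l₂, l₃, -, -, -, -, -, -, -, -⟩ :=
    @Configuration.ProjectivePlane.exists_config P L _ _
  have hcount : ∀ x : P, Configuration.lineCount L x = q := fun x =>
    (Configuration.ProjectivePlane.lineCount_eq_pointCount x l₁).trans (hlines l₁)
  have hscard : Fintype.card {l : L // p ∈ l} = q := by
    have h := hcount p
    rwa [Configuration.lineCount, Nat.card_eq_fintype_card] at h
  have htcard : ∀ l : L, p ∈ l → Fintype.card {x : P // x ∈ l ∧ x ≠ p} = q - 1 := by
    intro l hl
    have hA : (Finset.univ.filter fun x : P => x ∈ l).card = q := by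
      have h := hlines l
      rwa [Configuration.pointCount, Nat.card_eq_fintype_card, Fintype.card_subtype] at h
    have hB : (Finset.univ.filter fun x : P => x ∈ l ∧ x = p).card = 1 := by
      rw [Finset.card_eq_one]
      refine ⟨p, ?_⟩
      ext y
      simp only [Finset.mem_filter, Finset.mem_univ, true_and, Finset.mem_singleton]
      constructor
      · rintro ⟨-, h⟩; exact h
      · rintro rfl; exact ⟨hl, rfl⟩
    have hsplit := Finset.card_filter_add_card_filter_not
        (s := Finset.univ.filter fun x : P => x ∈ l) (p := fun x => x = p)
    rw [Finset.filter_filter, Finset.filter_filter] at hsplit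
    have hgoal : Fintype.card {x : P // x ∈ l ∧ x ≠ p}
        = (Finset.univ.filter fun x : P => x ∈ l ∧ ¬ x = p).card := by
      rw [Fintype.card_subtype]
    omega
  let sig0 : {l : L // p ∈ l} ≃ Fin q := Fintype.equivFinOfCardEq hscard
  let S : BMAux.Setup q P L p :=
    ⟨sig0, fun t => Fintype.equivFinOfCardEq (htcard _ (sig0.symm t).2)⟩
  set estar : (∀ _ : Fin q, Fin q) := (fun _ => BMAux.lastv q hq) with hestar
  set E : L → (∀ _ : Fin q, Fin q) := S.E hq with hE
  set f : (∀ _ : Fin q, Fin q) → ℝ := fun e =>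
      ((Finset.univ.filter fun m : L => p ∉ m ∧ E m = e).card : ℝ) +
        if e = estar then ((q - 1 : ℕ) : ℝ) else 0 with hf
  set H : Finset (∀ _ : Fin q, Fin q) :=
      ((Finset.univ.filter fun m : L => p ∉ m).image E) ∪ {estar} with hH
  have hEH : ∀ m : L, p ∉ m → E m ∈ H := by
    intro m hm
    rw [hH]
    exact Finset.mem_union_left _
      (Finset.mem_image.mpr ⟨m, Finset.mem_filter.mpr ⟨Finset.mem_univ m, hm⟩, rfl⟩)
  have hestarH : estar ∈ H := by
    rw [hH]; exact Finset.mem_union_right _ (Finset.mem_singleton_self _)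
  have hEneq : ∀ (m : L), p ∉ m → ∀ t, E m t ≠ estar t := by
    intro m hm t
    rw [hE, hestar]
    exact S.E_ne_last hq hm t
  have hcard_line_through : ∀ x : P, x ≠ p →
      (Finset.univ.filter fun l : L => x ∈ l ∧ p ∈ l).card = 1 := by
    intro x hxp
    rw [Finset.card_eq_one]
    refine ⟨Configuration.HasLines.mkLine hxp, ?_⟩
    ext l
    simp only [Finset.mem_filter, Finset.mem_univ, true_and, Finset.mem_singleton]
    constructor
    · rintro ⟨h1, h2⟩
      exact BMAux.line_unique hxp h1 h2 (Configuration.HasLines.mkLine_ax hxp).1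
        (Configuration.HasLines.mkLine_ax hxp).2
    · rintro rfl
      exact Configuration.HasLines.mkLine_ax hxp
  have hcard_avoid : ∀ x : P, x ≠ p →
      (Finset.univ.filter fun m : L => p ∉ m ∧ x ∈ m).card = q - 1 := by
    intro x hxp
    have hA : (Finset.univ.filter fun l : L => x ∈ l).card = q := by
      have h := hcount x
      rwa [Configuration.lineCount, Nat.card_eq_fintype_card, Fintype.card_subtype] at h
    have hsplit := Finset.card_filter_add_card_filter_not
        (s := Finset.univ.filter fun l : L => x ∈ l) (p := fun l => p ∈ l)
    rw [Finset.filter_filter, Finset.filter_filter] at hsplit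
    have hB := hcard_line_through x hxp
    have hgoal : (Finset.univ.filter fun m : L => p ∉ m ∧ x ∈ m) =
        (Finset.univ.filter fun l : L => x ∈ l ∧ ¬ p ∈ l) := by
      apply Finset.filter_congr; intro l _; tauto
    rw [hgoal]
    omega
  have hcount_old : ∀ (t : Fin q) (w : Fin (q - 1)),
      (Finset.univ.filter fun m : L =>
        p ∉ m ∧ E m t = Fin.castLE (Nat.sub_le q 1) w).card = q - 1 := by
    intro t w
    rw [hE]
    have hval : S.val t ((S.tau t).symm w) = Fin.castLE (Nat.sub_le q 1) w := by
      simp [BMAux.Setup.val]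
    have hfil : (Finset.univ.filter fun m : L =>
          p ∉ m ∧ S.E hq m t = Fin.castLE (Nat.sub_le q 1) w)
        = Finset.univ.filter fun m : L => p ∉ m ∧ ((S.tau t).symm w).1 ∈ m := by
      apply Finset.filter_congr
      intro m _
      constructor
      · rintro ⟨h1, h2⟩
        exact ⟨h1, (S.E_eq_val_iff hq h1 _).mp (h2.trans hval.symm)⟩
      · rintro ⟨h1, h2⟩
        exact ⟨h1, ((S.E_eq_val_iff hq h1 _).mpr h2).trans hval⟩
    rw [hfil]
    exact hcard_avoid _ ((S.tau t).symm w).2.2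
  have hcount_last : ∀ t : Fin q,
      (Finset.univ.filter fun m : L => p ∉ m ∧ E m t = BMAux.lastv q hq).card = 0 := by
    intro t
    rw [hE, Finset.card_eq_zero, Finset.filter_eq_empty_iff]
    rintro m - ⟨h1, h2⟩
    exact S.E_ne_last hq h1 t h2
  refine ⟨H, ⟨f, ⟨?_, ?_, ?_⟩, ?_⟩, ?_, ?_⟩
  · -- nonneg
    intro e
    rw [hf]
    apply add_nonneg (Nat.cast_nonneg _)
    split
    · exact Nat.cast_nonneg _
    · exact le_refl 0
  · -- vanish outside H
    intro e he
    have h1 : (Finset.univ.filter fun m : L => p ∉ m ∧ E m = e).card = 0 := by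
      rw [Finset.card_eq_zero, Finset.filter_eq_empty_iff]
      rintro m - ⟨hm, hEm⟩
      exact he (hEm ▸ hEH m hm)
    have h2 : e ≠ estar := fun h => he (h ▸ hestarH)
    rw [hf]
    simp [h1, h2]
  · -- balanced degrees
    intro t v w
    have key : ∀ u : Fin q, degree (a := fun _ => q) f t u = ((q - 1 : ℕ) : ℝ) := by
      intro u
      rw [hf]
      have hd := BMAux.degree_count (a := fun _ => q) (fun m : L => p ∉ m) E ((q - 1 : ℕ) : ℝ)
        estar t u
      refine hd.trans ?_
      rcases eq_or_ne u (BMAux.lastv q hq) with rfl | hu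
      · rw [hcount_last t]
        simp [hestar]
      · have hu' : u.1 < q - 1 := by
          have h1 := u.isLt
          have h2 : u.1 ≠ q - 1 := fun h => hu (Fin.ext h)
          omega
        have hcast : u = Fin.castLE (Nat.sub_le q 1) ⟨u.1, hu'⟩ := Fin.ext rfl
        have hc := hcount_old t ⟨u.1, hu'⟩
        rw [← hcast] at hc
        have hne2 : estar t ≠ u := fun h => hu h.symm
        rw [hc, if_neg hne2, add_zero]
    rw [key v, key w]
  · -- f ≠ 0
    intro h0
    have h := congrFun h0 estar
    rw [hf] at h
    simp only [eq_self_iff_true, if_true, Pi.zero_apply] at h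
    have h1 : (0:ℝ) ≤ ((Finset.univ.filter fun m : L => p ∉ m ∧ E m = estar).card : ℝ) :=
      Nat.cast_nonneg _
    have h2 : (0:ℝ) < ((q - 1 : ℕ) : ℝ) := by
      have : 0 < q - 1 := by omega
      exact_mod_cast this
    linarith
  · -- matching of size 2
    obtain ⟨m₀, hm₀⟩ := Configuration.Nondegenerate.exists_line (L := L) p
    have hne0 : E m₀ ≠ estar := fun h => hEneq m₀ hm₀ ⟨0, by omega⟩ (congrFun h _)
    refine ⟨{E m₀, estar}, ⟨?_, ?_⟩, ?_⟩
    · intro x hx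
      rcases Finset.mem_insert.mp hx with rfl | hx
      · exact hEH m₀ hm₀
      · rw [Finset.mem_singleton.mp hx]; exact hestarH
    · intro e he g hg hneg t
      rcases Finset.mem_insert.mp he with rfl | he <;>
        rcases Finset.mem_insert.mp hg with rfl | hg
      · exact absurd rfl hneg
      · rw [Finset.mem_singleton.mp hg]; exact hEneq m₀ hm₀ t
      · rw [Finset.mem_singleton.mp he]; exact fun h => hEneq m₀ hm₀ t h.symm
      · rw [Finset.mem_singleton.mp he, Finset.mem_singleton.mp hg] at hneg
        exact absurd rfl hneg
    · rw [Finset.card_insert_of_notMem (by simpa using hne0), Finset.card_singleton]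
  · -- matching number at most 2
    rintro M ⟨hsub, hpair⟩
    have hone : ∀ a ∈ M.erase estar, ∀ b ∈ M.erase estar, a = b := by
      intro a ha b hb
      by_contra hab
      obtain ⟨ha1, ha2⟩ := Finset.mem_erase.mp ha
      obtain ⟨hb1, hb2⟩ := Finset.mem_erase.mp hb
      have haI : a ∈ (Finset.univ.filter fun m : L => p ∉ m).image E := by
        rcases Finset.mem_union.mp (hH ▸ hsub ha2) with h | h
        · exact h
        · exact absurd (Finset.mem_singleton.mp h) ha1
      have hbI : b ∈ (Finset.univ.filter fun m : L => p ∉ m).image E := by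
        rcases Finset.mem_union.mp (hH ▸ hsub hb2) with h | h
        · exact h
        · exact absurd (Finset.mem_singleton.mp h) hb1
      obtain ⟨m, hmF, hmE⟩ := Finset.mem_image.mp haI
      obtain ⟨m', hmF', hmE'⟩ := Finset.mem_image.mp hbI
      have hm : p ∉ m := (Finset.mem_filter.mp hmF).2
      have hm' : p ∉ m' := (Finset.mem_filter.mp hmF').2
      have hmm : m ≠ m' := by
        rintro rfl
        exact hab (hmE.symm.trans hmE')
      obtain ⟨t, ht⟩ := S.exists_eq hq hm hm' hmm
      have : a t = b t := by
        rw [← hmE, ← hmE']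
        exact ht
      exact hpair a ha2 b hb2 hab t this
    have hcard1 : (M.erase estar).card ≤ 1 := Finset.card_le_one.mpr hone
    by_cases hst : estar ∈ M
    · have h2 := Finset.card_erase_add_one hst
      omega
    · rw [Finset.erase_eq_of_notMem hst] at hcard1
      omega
end

section
/- For every integer n ≥ 2 there exists a cake-division instance with 2n−2 agents and 2 cakes, each cut into n slices, in which no set of n agents is placatable. -/
/-- The space of partitions of `d` cakes, cake `t` being cut into `a t` slices:
each coordinate lies in the standard simplex. -/
def PartitionSpace (d : ℕ) (a : Fin d → ℕ) : Set (∀ t, Fin (a t) → ℝ) :=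
  {P | ∀ t, P t ∈ stdSimplex ℝ (Fin (a t))}

/-- A cake-division instance with `n` agents and `d` cakes, cake `t` cut into
`a t` slices: for each agent `i` and index vector `j`, a set `A i j ⊆ 𝒫` of
partitions in which agent `i` accepts the `d`-tuple of slices indexed by `j`.
The sets are closed and the hungry-agents condition holds. -/
structure CakeInstance (n d : ℕ) (a : Fin d → ℕ) where
  A : Fin n → (∀ t, Fin (a t)) → Set (∀ t, Fin (a t) → ℝ)
  subset_partitionSpace : ∀ i j, A i j ⊆ PartitionSpace d a
  isClosed : ∀ i j, IsClosed (A i j)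
  hungry : ∀ i, ∀ P ∈ PartitionSpace d a, ∃ j : ∀ t, Fin (a t),
    P ∈ A i j ∧ ∀ t, 0 < P t (j t)

/-- A set `Q` of agents is placatable: there exist a partition `P` and index
vectors, one acceptable at `P` for each agent of `Q`, such that the index
vectors of distinct agents of `Q` differ in every coordinate. -/
def Placatable {n d : ℕ} {a : Fin d → ℕ} (C : CakeInstance n d a)
    (Q : Finset (Fin n)) : Prop :=
  ∃ P ∈ PartitionSpace d a, ∃ φ : Fin n → ∀ t, Fin (a t),
    (∀ q ∈ Q, P ∈ C.A q (φ q)) ∧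
    ∀ q ∈ Q, ∀ q' ∈ Q, q ≠ q' → ∀ t, φ q t ≠ φ q' t


/-!
Agents come in two types `0` and `1`, `n - 1` of each, and an agent of type `s ∈ Fin n` regards
the pair of slices `(j, j + s)` as fair once it has total length `2/n`, while every other pair
must reach `3/n`. If `n` agents are placated, the lengths of their pairs add up to exactly `2`, so all of
them take fair pairs; summing `j₁ - j₀ = s` over the agents then gives `∑ s = 0` in `Fin n`,
i.e. `n` divides the number of agents of the second type, which lies strictly between `0` and
`n`. Hunger holds by an averaging argument: either the two largest slices already reach `3/n`,
or both are below `2/n` and some fair pair of total length `≥ 2/n` consists of nonempty slices.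
-/

open Finset

theorem Finset.sum_comp_eq_sum_univ_of_injOn {α ι M : Type*} [Fintype ι] [AddCommMonoid M]
    {Q : Finset α} {φ : α → ι} (hφ : Set.InjOn φ Q) (hQ : #Q = Fintype.card ι)
    (f : ι → M) :
    ∑ q ∈ Q, f (φ q) = ∑ i, f i := by
  classical
  have himage : Q.image φ = univ :=
    eq_univ_of_card _ (by rw [card_image_of_injOn hφ, hQ])
  rw [← himage, sum_image hφ]

theorem Fin.card_filter_val_lt_le {m : ℕ} (Q : Finset (Fin m)) (k : ℕ) :
    #{i ∈ Q | i.val < k} ≤ k := by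
  simpa using card_le_card_of_injOn (t := range k) Fin.val
    (fun i hi => by simp_all) Fin.val_injective.injOn

theorem Fin.card_filter_le_val_le {m : ℕ} (Q : Finset (Fin m)) (k : ℕ) :
    #{i ∈ Q | k ≤ i.val} ≤ m - k := by
  simpa using card_le_card_of_injOn (t := Ico k m) Fin.val
    (fun i hi => by simp_all) Fin.val_injective.injOn

section stdSimplex

variable {ι : Type*} [Fintype ι] {x y : ι → ℝ}

theorem inv_card_le_of_mem_stdSimplex_of_forall_le (hx : x ∈ stdSimplex ℝ ι) {m : ι}
    (hm : ∀ i, x i ≤ x m) : (Fintype.card ι : ℝ)⁻¹ ≤ x m := by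
  have hcard : (1 : ℝ) ≤ Fintype.card ι * x m := by
    simpa [← hx.2] using sum_le_card_nsmul univ x (x m) fun i _ => hm i
  rwa [inv_le_iff_one_le_mul₀' (Nat.cast_pos.mpr (Fintype.card_pos_iff.mpr ⟨m⟩))]

theorem exists_two_div_card_le_add_of_mem_stdSimplex [Nonempty ι] (hx : x ∈ stdSimplex ℝ ι)
    (hy : y ∈ stdSimplex ℝ ι) (e : ι ≃ ι) :
    ∃ i, 2 / (Fintype.card ι : ℝ) ≤ x i + y (e i) := by
  have hsum : ∑ i, (x i + y (e i)) = 2 := by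
    rw [sum_add_distrib, e.sum_comp y, hx.2, hy.2]; norm_num
  have hconst : ∑ _i : ι, 2 / (Fintype.card ι : ℝ) = 2 := by
    rw [sum_const, card_univ, nsmul_eq_mul]
    field_simp
  obtain ⟨i, -, hi⟩ := exists_le_of_sum_le univ_nonempty (hconst.trans hsum.symm).le
  exact ⟨i, hi⟩

end stdSimplex

theorem isClosed_partitionSpace (d : ℕ) (a : Fin d → ℕ) : IsClosed (PartitionSpace d a) := by
  simp only [PartitionSpace, Set.ofPred_forall]
  exact isClosed_iInter fun t => (isClosed_stdSimplex ℝ _).preimage (continuous_apply t)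

section shiftInstance

variable {n : ℕ}

noncomputable def shiftThreshold (s : Fin n) (j : Fin 2 → Fin n) : ℝ :=
  (if j 1 = j 0 + s then 2 else 3) / n

theorem two_div_le_shiftThreshold (s : Fin n) (j : Fin 2 → Fin n) :
    2 / (n : ℝ) ≤ shiftThreshold s j :=
  div_le_div_of_nonneg_right (by split_ifs <;> norm_num) n.cast_nonneg

theorem shiftThreshold_le_three_div (s : Fin n) (j : Fin 2 → Fin n) :
    shiftThreshold s j ≤ 3 / n :=
  div_le_div_of_nonneg_right (by split_ifs <;> norm_num) n.cast_nonneg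

theorem exists_shiftThreshold_le [NeZero n] {P : Fin 2 → Fin n → ℝ}
    (hP : P ∈ PartitionSpace 2 fun _ => n) (s : Fin n) :
    ∃ j, shiftThreshold s j ≤ P 0 (j 0) + P 1 (j 1) ∧ ∀ t, 0 < P t (j t) := by
  obtain ⟨m₀, hm₀⟩ := Finite.exists_max (P 0)
  obtain ⟨m₁, hm₁⟩ := Finite.exists_max (P 1)
  have hlarge₀ := inv_card_le_of_mem_stdSimplex_of_forall_le (hP 0) hm₀
  have hlarge₁ := inv_card_le_of_mem_stdSimplex_of_forall_le (hP 1) hm₁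
  simp only [Fintype.card_fin] at hlarge₀ hlarge₁
  have hpos : (0 : ℝ) < (n : ℝ)⁻¹ := by simp [Nat.pos_of_neZero n]
  by_cases hmax : 3 / (n : ℝ) ≤ P 0 m₀ + P 1 m₁
  · refine ⟨![m₀, m₁], (shiftThreshold_le_three_div s _).trans hmax, ?_⟩
    simp only [Fin.forall_fin_two, Matrix.cons_val_zero, Matrix.cons_val_one]
    exact ⟨hpos.trans_le hlarge₀, hpos.trans_le hlarge₁⟩
  · obtain ⟨j, hj⟩ :=
      exists_two_div_card_le_add_of_mem_stdSimplex (hP 0) (hP 1) (Equiv.addRight s)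
    simp only [Fintype.card_fin, Equiv.coe_addRight] at hj
    have hthree : 3 / (n : ℝ) = 2 / n + (n : ℝ)⁻¹ := by ring
    refine ⟨![j, j + s], ?_, ?_⟩
    · simpa [shiftThreshold] using hj
    · simp only [Fin.forall_fin_two, Matrix.cons_val_zero, Matrix.cons_val_one]
      constructor <;> linarith [hm₀ j, hm₁ (j + s)]

noncomputable def shiftInstance [NeZero n] {m : ℕ} (s : Fin m → Fin n) :
    CakeInstance m 2 fun _ => n where
  A i j := PartitionSpace 2 (fun _ => n) ∩ {P | shiftThreshold (s i) j ≤ P 0 (j 0) + P 1 (j 1)}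
  subset_partitionSpace _ _ := Set.inter_subset_left
  isClosed _ _ := (isClosed_partitionSpace _ _).inter (isClosed_le continuous_const (by fun_prop))
  hungry i P hP :=
    let ⟨j, hj, hpos⟩ := exists_shiftThreshold_le hP (s i)
    ⟨j, ⟨hP, hj⟩, hpos⟩

theorem sum_eq_zero_of_placatable_shiftInstance [NeZero n] {m : ℕ} {s : Fin m → Fin n}
    {Q : Finset (Fin m)} (hQ : #Q = n) (hplac : Placatable (shiftInstance s) Q) :
    ∑ q ∈ Q, s q = 0 := by
  obtain ⟨P, hP, φ, hacc, hdiff⟩ := hplac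
  have hinj (t : Fin 2) : Set.InjOn (fun q => φ q t) Q := fun q hq q' hq' h =>
    by_contra fun hne => hdiff q hq q' hq' hne t h
  have hcard : #Q = Fintype.card (Fin n) := by rw [hQ, Fintype.card_fin]
  have hsum (t : Fin 2) : ∑ q ∈ Q, P t (φ q t) = 1 := by
    rw [sum_comp_eq_sum_univ_of_injOn (hinj t) hcard, (hP t).2]
  have hfair : ∀ q ∈ Q, φ q 1 = φ q 0 + s q := by
    by_contra! ⟨q, hq, hunfair⟩
    have hlt : ∑ _q ∈ Q, 2 / (n : ℝ) < ∑ q ∈ Q, (P 0 (φ q 0) + P 1 (φ q 1)) := by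
      refine sum_lt_sum (fun q hq => (two_div_le_shiftThreshold _ _).trans (hacc q hq).2)
        ⟨q, hq, ?_⟩
      refine lt_of_lt_of_le ?_ (hacc q hq).2
      simp only [shiftThreshold, if_neg hunfair]
      exact div_lt_div_of_pos_right (by norm_num) (mod_cast Nat.pos_of_neZero n)
    rw [sum_const, hQ, sum_add_distrib, hsum 0, hsum 1, nsmul_eq_mul,
      mul_div_cancel₀ _ (NeZero.ne (n : ℝ))] at hlt
    norm_num at hlt
  calc ∑ q ∈ Q, s q = ∑ q ∈ Q, φ q 1 - ∑ q ∈ Q, φ q 0 := by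
        rw [← sum_sub_distrib]
        exact sum_congr rfl fun q hq => by rw [hfair q hq]; abel
    _ = ∑ i, i - ∑ i, i := congrArg₂ (· - ·)
        (sum_comp_eq_sum_univ_of_injOn (hinj 1) hcard id)
        (sum_comp_eq_sum_univ_of_injOn (hinj 0) hcard id)
    _ = 0 := sub_self _

end shiftInstance

open Fin.CommRing in
theorem sum_ite_sub_one_le_val_ne_zero {n : ℕ} [NeZero n] {Q : Finset (Fin (2 * n - 2))}
    (hQ : #Q = n) : ∑ q ∈ Q, (if n - 1 ≤ q.val then 1 else 0 : Fin n) ≠ 0 := by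
  rw [sum_boole, Ne, Fin.natCast_eq_zero]
  intro hdvd
  have hsplit := card_filter_add_card_filter_not (s := Q) fun i => n - 1 ≤ i.val
  simp only [not_le] at hsplit
  have hsecond := Fin.card_filter_le_val_le Q (n - 1)
  have hfirst := Fin.card_filter_val_lt_le Q (n - 1)
  have hn := Nat.pos_of_neZero n
  have := Nat.eq_zero_of_dvd_of_lt hdvd (by omega)
  omega

/-- For `n ≥ 2` there is a cake-division instance with `2n-2` agents and `2`
cakes, each cut into `n` slices, in which no set of `n` agents is placatable. -/
theorem ad_upper_2n2_n_n (n : ℕ) (hn : 2 ≤ n) :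
    ∃ C : CakeInstance (2 * n - 2) 2 (fun _ => n),
      ∀ Q : Finset (Fin (2 * n - 2)), Q.card = n → ¬ Placatable C Q := by
  have : NeZero n := ⟨by omega⟩
  exact ⟨shiftInstance fun i => if n - 1 ≤ i.val then (1 : Fin n) else 0, fun Q hQ hplac =>
    sum_ite_sub_one_le_val_ne_zero hQ (sum_eq_zero_of_placatable_shiftInstance hQ hplac)⟩
end
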